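/- arXiv:math/0112268 — 6 statements merged into one kernel-verified Lean document; each statement's English description precedes it below -/
import Mathlib

section
/- There exists a unique nonempty compact set E ⊆ ℝⁿ such that for every nonempty compact set F ⊆ ℝⁿ, the sets ψ^k(F) converge to E in the Hausdorff metric as k → ∞. -/
open Metric Filter Set

/-- The composition `ψ_{j 0} ∘ ψ_{j 1} ∘ ⋯ ∘ ψ_{j (k-1)}`. -/
noncomputable def iterMap {X : Type*} {m : ℕ} (ψ : Fin m → X → X) :
    (k : ℕ) → (Fin k → Fin m) → X → X
  | 0, _ => id
  | k + 1, j => ψ (j 0) ∘ iterMap ψ k (fun i => j i.succ)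

/-- The index set `L^k = N_1 × ⋯ × N_k`, realized as the finset of functions
`j : Fin k → Fin m` whose `i`-th component lies in `N (i+1)`. -/
def Lk {m : ℕ} (N : ℕ → Finset (Fin m)) (k : ℕ) : Finset (Fin k → Fin m) :=
  Finset.univ.filter fun j => ∀ i : Fin k, j i ∈ N (i + 1)

/-- `ψ^k(F) = ⋃_{(j_1,…,j_k) ∈ L^k} (ψ_{j_1} ∘ ⋯ ∘ ψ_{j_k})(F)`. -/
noncomputable def psiImage {X : Type*} {m : ℕ} (ψ : Fin m → X → X)
    (N : ℕ → Finset (Fin m)) (k : ℕ) (F : Set X) : Set X :=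
  ⋃ j ∈ Lk N k, iterMap ψ k j '' F

open EMetric ENNReal NNReal

section Aux

variable {X : Type*} [MetricSpace X] {m : ℕ} {ψ : Fin m → X → X} {N : ℕ → Finset (Fin m)}

lemma mem_Lk {k : ℕ} {j : Fin k → Fin m} : j ∈ Lk N k ↔ ∀ i : Fin k, j i ∈ N (i + 1) := by
  simp [Lk]

lemma Lk_nonempty (hN : ∀ k, 1 ≤ k → (N k).Nonempty) (k : ℕ) : ∃ j, j ∈ Lk N k :=
  ⟨fun i => (hN (i + 1) (Nat.le_add_left 1 i)).choose,
    mem_Lk.2 fun i => (hN (i + 1) (Nat.le_add_left 1 i)).choose_spec⟩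

lemma iterMap_lipschitz {C : ℝ≥0} (hL : ∀ j, LipschitzWith C (ψ j)) :
    ∀ (k : ℕ) (j : Fin k → Fin m), LipschitzWith (C ^ k) (iterMap ψ k j) := by
  intro k
  induction k with
  | zero => intro j; simpa [iterMap] using LipschitzWith.id
  | succ k ih =>
    intro j
    have : iterMap ψ (k + 1) j = ψ (j 0) ∘ iterMap ψ k (fun i => j i.succ) := rfl
    rw [this, pow_succ, mul_comm]
    exact (hL (j 0)).comp (ih _)

lemma iterMap_succ' : ∀ (k : ℕ) (j : Fin (k + 1) → Fin m),
    iterMap ψ (k + 1) j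
      = iterMap ψ k (fun i => j i.castSucc) ∘ ψ (j (Fin.last k))
  | 0, j => rfl
  | (k + 1), j => by
    show ψ (j 0) ∘ iterMap ψ (k + 1) (fun i => j i.succ) = _
    rw [iterMap_succ' k (fun i => j i.succ)]
    show ψ (j 0) ∘ (iterMap ψ k (fun i => j i.castSucc.succ) ∘ ψ (j (Fin.last k).succ))
        = ψ (j (0 : Fin (k + 1)).castSucc) ∘
            (iterMap ψ k (fun i => j i.succ.castSucc) ∘ ψ (j (Fin.last (k + 1))))
    simp only [Fin.castSucc_zero, Fin.succ_castSucc, Fin.succ_last]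

lemma psiImage_isCompact {C : ℝ≥0} (hL : ∀ j, LipschitzWith C (ψ j)) (k : ℕ)
    {F : Set X} (hF : IsCompact F) : IsCompact (psiImage ψ N k F) := by
  apply Set.Finite.isCompact_biUnion (Set.toFinite _)
  intro j _
  exact hF.image (iterMap_lipschitz hL k j).continuous

lemma psiImage_nonempty (hN : ∀ k, 1 ≤ k → (N k).Nonempty) (k : ℕ)
    {F : Set X} (hF : F.Nonempty) : (psiImage ψ N k F).Nonempty := by
  obtain ⟨j, hj⟩ := Lk_nonempty hN k
  obtain ⟨x, hx⟩ := hF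
  exact ⟨iterMap ψ k j x, Set.mem_biUnion hj (Set.mem_image_of_mem _ hx)⟩

lemma infEdist_image_le {C : ℝ≥0} {f : X → X} (hf : LipschitzWith C f) {s : Set X}
    (hs : IsCompact s) (hne : s.Nonempty) (x : X) :
    infEdist (f x) (f '' s) ≤ (C : ℝ≥0∞) * infEdist x s := by
  obtain ⟨y, hy, hxy⟩ := hs.exists_infEdist_eq_edist hne x
  calc infEdist (f x) (f '' s) ≤ edist (f x) (f y) :=
        infEdist_le_edist_of_mem (Set.mem_image_of_mem f hy)
    _ ≤ (C : ℝ≥0∞) * edist x y := hf.edist_le_mul x y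
    _ = (C : ℝ≥0∞) * infEdist x s := by rw [infEdist, hxy]

lemma psiImage_infEdist_le {C : ℝ≥0} (hL : ∀ j, LipschitzWith C (ψ j)) (k : ℕ)
    {F G : Set X} (hG : IsCompact G) (hGne : G.Nonempty) :
    ∀ x ∈ psiImage ψ N k F,
      infEdist x (psiImage ψ N k G) ≤ (C : ℝ≥0∞) ^ k * hausdorffEdist F G := by
  intro x hx
  simp only [psiImage, Set.mem_iUnion, exists_prop] at hx
  obtain ⟨j, hj, f, hf, rfl⟩ := hx
  calc infEdist (iterMap ψ k j f) (psiImage ψ N k G)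
      ≤ infEdist (iterMap ψ k j f) (iterMap ψ k j '' G) :=
        infEdist_anti (Set.subset_biUnion_of_mem (u := fun j => iterMap ψ k j '' G) hj)
    _ ≤ ((C ^ k : ℝ≥0) : ℝ≥0∞) * infEdist f G :=
        infEdist_image_le (iterMap_lipschitz hL k j) hG hGne f
    _ ≤ (C : ℝ≥0∞) ^ k * hausdorffEdist F G := by
        rw [ENNReal.coe_pow]
        exact mul_le_mul_right (infEdist_le_hausdorffEdist_of_mem hf) _

lemma hausdorffEdist_psiImage_le {C : ℝ≥0} (hL : ∀ j, LipschitzWith C (ψ j)) (k : ℕ)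
    {F G : Set X} (hF : IsCompact F) (hFne : F.Nonempty)
    (hG : IsCompact G) (hGne : G.Nonempty) :
    hausdorffEdist (psiImage ψ N k F) (psiImage ψ N k G)
      ≤ (C : ℝ≥0∞) ^ k * hausdorffEdist F G := by
  apply hausdorffEdist_le_of_infEdist
  · exact psiImage_infEdist_le hL k hG hGne
  · intro x hx
    have := psiImage_infEdist_le (N := N) hL k hF hFne x hx
    rwa [hausdorffEdist, hausdorffEdist_comm] at this

lemma psiImage_succ (k : ℕ) (F : Set X) :
    psiImage ψ N (k + 1) F = psiImage ψ N k (⋃ l ∈ N (k + 1), ψ l '' F) := by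
  ext x
  simp only [psiImage, Set.mem_iUnion, exists_prop]
  constructor
  · rintro ⟨j, hj, hx⟩
    rw [mem_Lk] at hj
    refine ⟨fun i => j i.castSucc, mem_Lk.2 fun i => ?_, ?_⟩
    · have := hj i.castSucc
      simpa using this
    · rw [iterMap_succ', Set.image_comp] at hx
      refine Set.image_mono ?_ hx
      have hlast : j (Fin.last k) ∈ N (k + 1) := by simpa using hj (Fin.last k)
      exact fun y hy => Set.mem_biUnion hlast hy
  · rintro ⟨j, hj, hx⟩
    rw [mem_Lk] at hj
    rw [Set.image_iUnion₂] at hx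
    simp only [Set.mem_iUnion, exists_prop] at hx
    obtain ⟨l, hl, hx⟩ := hx
    refine ⟨(Fin.snoc j l : Fin (k + 1) → Fin m), mem_Lk.2 fun i => ?_, ?_⟩
    · refine Fin.lastCases ?_ ?_ i
      · simpa [Fin.snoc_last] using hl
      · intro i'
        simpa [Fin.snoc_castSucc] using hj i'
    · rw [iterMap_succ', Set.image_comp]
      have h1 : (fun i : Fin k => (Fin.snoc j l : Fin (k + 1) → Fin m) i.castSucc) = j := by
        funext i; simp [Fin.snoc_castSucc]
      have h2 : (Fin.snoc j l : Fin (k + 1) → Fin m) (Fin.last k) = l := by simp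
      rw [h1, h2, ← Set.image_comp]
      rw [← Set.image_comp] at hx
      exact hx

end Aux

/-- There exists a unique nonempty compact set `E ⊆ ℝⁿ` such that for every nonempty
compact set `F ⊆ ℝⁿ`, the sets `ψ^k(F)` converge to `E` in the Hausdorff metric. -/
theorem stmt0 {n m : ℕ}
    (ψ : Fin m → EuclideanSpace ℝ (Fin n) → EuclideanSpace ℝ (Fin n)) (r : Fin m → ℝ)
    (hψ : ∀ j x y, dist (ψ j x) (ψ j y) = r j * dist x y) (hr : ∀ j, r j < 1)
    (N : ℕ → Finset (Fin m)) (hN : ∀ k, 1 ≤ k → (N k).Nonempty) :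
    ∃! E : Set (EuclideanSpace ℝ (Fin n)), IsCompact E ∧ E.Nonempty ∧
      ∀ F : Set (EuclideanSpace ℝ (Fin n)), IsCompact F → F.Nonempty →
        Tendsto (fun k => hausdorffDist (psiImage ψ N k F) E) atTop (nhds 0) := by
  classical
  -- the uniform contraction ratio
  set C : ℝ≥0 := Finset.univ.sup fun j => (r j).toNNReal with hCdef
  have hC1 : C < 1 := by
    rw [hCdef, Finset.sup_lt_iff (by norm_num : (⊥ : ℝ≥0) < 1)]
    intro j _
    exact Real.toNNReal_lt_one.2 (hr j)
  have hC1' : (C : ℝ) < 1 := by exact_mod_cast hC1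
  have hC0 : (0 : ℝ) ≤ (C : ℝ) := C.coe_nonneg
  have hL : ∀ j, LipschitzWith C (ψ j) := by
    intro j
    apply LipschitzWith.of_dist_le_mul
    intro x y
    rw [hψ j x y]
    have h1 : r j ≤ ((r j).toNNReal : ℝ) := Real.le_coe_toNNReal _
    have h2 : ((r j).toNNReal : ℝ) ≤ (C : ℝ) := by
      exact_mod_cast Finset.le_sup (f := fun j => (r j).toNNReal) (Finset.mem_univ j)
    exact mul_le_mul_of_nonneg_right (h1.trans h2) dist_nonneg
  -- work in the space of nonempty compact subsets
  let K := TopologicalSpace.NonemptyCompacts (EuclideanSpace ℝ (Fin n))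
  let T : ℕ → K → K := fun k F =>
    ⟨⟨psiImage ψ N k F, psiImage_isCompact hL k F.isCompact⟩,
      psiImage_nonempty hN k F.nonempty⟩
  have hTedist : ∀ (k : ℕ) (F G : K),
      edist (T k F) (T k G) ≤ (C : ℝ≥0∞) ^ k * edist F G := fun k F G =>
    hausdorffEdist_psiImage_le hL k F.isCompact F.nonempty G.isCompact G.nonempty
  have hTdist : ∀ (k : ℕ) (F G : K),
      dist (T k F) (T k G) ≤ (C : ℝ) ^ k * dist F G := by
    intro k F G
    have hfin : (C : ℝ≥0∞) ^ k * edist F G ≠ ⊤ :=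
      ENNReal.mul_ne_top (by simp) (edist_ne_top F G)
    have := ENNReal.toReal_mono hfin (hTedist k F G)
    rwa [ENNReal.toReal_mul, ENNReal.toReal_pow, ENNReal.coe_toReal,
      ← dist_edist, ← dist_edist] at this
  -- the base sequence starting from a singleton
  let F₀ : K := ⟨⟨{0}, isCompact_singleton⟩, Set.singleton_nonempty 0⟩
  -- a compact set containing `F₀` and all its images
  let B : Set (EuclideanSpace ℝ (Fin n)) := ↑F₀ ∪ ⋃ l, ψ l '' ↑F₀
  have hBc : IsCompact B :=
    F₀.isCompact.union (isCompact_iUnion fun l => F₀.isCompact.image (hL l).continuous)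
  set D : ℝ≥0∞ := EMetric.diam B with hDdef
  have hDne : D ≠ ⊤ := hBc.isBounded.ediam_ne_top
  have key : ∀ k : ℕ, edist (T (k + 1) F₀) (T k F₀) ≤ (C : ℝ≥0∞) ^ k * D := by
    intro k
    have hSc : IsCompact (⋃ l ∈ N (k + 1), ψ l '' (F₀ : Set (EuclideanSpace ℝ (Fin n)))) := by
      apply Set.Finite.isCompact_biUnion (Set.toFinite _)
      exact fun l _ => F₀.isCompact.image (hL l).continuous
    have hSne : (⋃ l ∈ N (k + 1), ψ l '' (F₀ : Set (EuclideanSpace ℝ (Fin n)))).Nonempty := by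
      obtain ⟨l, hl⟩ := hN (k + 1) (Nat.le_add_left 1 k)
      exact ⟨ψ l 0, Set.mem_biUnion hl (Set.mem_image_of_mem _ rfl)⟩
    have hedist : edist (T (k + 1) F₀) (T k F₀)
        = hausdorffEdist (psiImage ψ N (k + 1) (F₀ : Set (EuclideanSpace ℝ (Fin n)))) (psiImage ψ N k (F₀ : Set (EuclideanSpace ℝ (Fin n)))) :=
      rfl
    rw [hedist, psiImage_succ]
    refine (hausdorffEdist_psiImage_le hL k hSc hSne F₀.isCompact F₀.nonempty).trans ?_
    refine mul_le_mul_right ?_ _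
    refine (hausdorffEdist_le_ediam hSne F₀.nonempty).trans ?_
    apply EMetric.diam_mono
    apply Set.union_subset
    · refine Set.iUnion₂_subset fun l _ => ?_
      exact (Set.subset_iUnion (fun l => ψ l '' (F₀ : Set (EuclideanSpace ℝ (Fin n)))) l).trans Set.subset_union_right
    · exact Set.subset_union_left
  have keyd : ∀ k : ℕ, dist (T k F₀) (T (k + 1) F₀) ≤ D.toReal * (C : ℝ) ^ k := by
    intro k
    have hfin : (C : ℝ≥0∞) ^ k * D ≠ ⊤ := ENNReal.mul_ne_top (by simp) hDne
    have := ENNReal.toReal_mono hfin (key k)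
    rw [ENNReal.toReal_mul, ENNReal.toReal_pow, ENNReal.coe_toReal, ← dist_edist] at this
    rw [dist_comm]
    linarith [this]
  have hcauchy : CauchySeq fun k => T k F₀ :=
    cauchySeq_of_le_geometric (C : ℝ) D.toReal hC1' keyd
  obtain ⟨E0, hE0⟩ := cauchySeq_tendsto_of_complete hcauchy
  -- convergence of all sequences to E0
  have hconv : ∀ F : K, Tendsto (fun k => dist (T k F) E0) atTop (nhds 0) := by
    intro F
    have hbound : ∀ k, dist (T k F) E0 ≤ (C : ℝ) ^ k * dist F F₀ + dist (T k F₀) E0 := by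
      intro k
      calc dist (T k F) E0 ≤ dist (T k F) (T k F₀) + dist (T k F₀) E0 := dist_triangle _ _ _
        _ ≤ (C : ℝ) ^ k * dist F F₀ + dist (T k F₀) E0 := by
            have := hTdist k F F₀; linarith
    have hlim : Tendsto (fun k => (C : ℝ) ^ k * dist F F₀ + dist (T k F₀) E0)
        atTop (nhds 0) := by
      have h1 : Tendsto (fun k => (C : ℝ) ^ k * dist F F₀) atTop (nhds 0) := by
        simpa using (tendsto_pow_atTop_nhds_zero_of_lt_one hC0 hC1').mul_const (dist F F₀)
      have h2 : Tendsto (fun k => dist (T k F₀) E0) atTop (nhds 0) :=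
        tendsto_iff_dist_tendsto_zero.1 hE0
      simpa using h1.add h2
    exact squeeze_zero (fun k => dist_nonneg) hbound hlim
  -- conclusion
  refine ⟨(E0 : Set (EuclideanSpace ℝ (Fin n))), ⟨E0.isCompact, E0.nonempty, ?_⟩, ?_⟩
  · intro F hF hFne
    have := hconv ⟨⟨F, hF⟩, hFne⟩
    have heq : ∀ k : ℕ, dist (T k ⟨⟨F, hF⟩, hFne⟩) E0
        = hausdorffDist (psiImage ψ N k F) (E0 : Set (EuclideanSpace ℝ (Fin n))) :=
      fun k => NonemptyCompacts.dist_eq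
    simpa [heq] using this
  · rintro E' ⟨hE'c, hE'ne, hE'⟩
    let E'K : K := ⟨⟨E', hE'c⟩, hE'ne⟩
    have h1 : Tendsto (fun k => T k E'K) atTop (nhds E0) := by
      rw [tendsto_iff_dist_tendsto_zero]
      exact hconv E'K
    have h2 : Tendsto (fun k => T k E'K) atTop (nhds E'K) := by
      rw [tendsto_iff_dist_tendsto_zero]
      have := hE' (E' : Set (EuclideanSpace ℝ (Fin n))) hE'c hE'ne
      have heq : ∀ k : ℕ, dist (T k E'K) E'K
          = hausdorffDist (psiImage ψ N k (E' : Set (EuclideanSpace ℝ (Fin n)))) E' :=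
        fun k => NonemptyCompacts.dist_eq
      simpa [heq] using this
    have : E'K = E0 := tendsto_nhds_unique h2 h1
    exact congrArg (fun s : K => (s : Set (EuclideanSpace ℝ (Fin n)))) this
end

section
/- There exists a unique number s ≥ 0 such that liminf_{k→∞} ∑_{(j_1,…,j_k) ∈ L^k} (r_{j_1}⋯r_{j_k})^t = ∞ for every t with 0 ≤ t < s, and liminf_{k→∞} ∑_{(j_1,…,j_k) ∈ L^k} (r_{j_1}⋯r_{j_k})^t = 0 for every t > s. -/
/-!
Let `R < 1` bound all ratios. Every word of length `k` has product at most `R ^ k`, so raising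
the exponent by `δ > 0` multiplies the `k`-th sum by at most `R ^ (δ k)`. Hence once the liminf
is finite at some exponent it vanishes at every larger one, and at exponents with `m R ^ t < 1`
it vanishes outright because `L^k` has at most `m ^ k` words. The critical exponent is the
infimum of the exponents where the liminf vanishes.
-/

open Filter Set
open scoped ENNReal Topology

lemma existsUnique_critical_exponent {f : ℝ → ℝ≥0∞}
    (hf : ∀ t t', t < t' → f t = ⊤ ∨ f t' = 0) (hzero : ∃ t, 0 ≤ t ∧ f t = 0) :
    ∃! s : ℝ, 0 ≤ s ∧ (∀ t, 0 ≤ t → t < s → f t = ⊤) ∧ (∀ t, s < t → f t = 0) := by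
  have le_of_critical : ∀ a b : ℝ, 0 ≤ a → (∀ t, a < t → f t = 0) →
      (∀ t, 0 ≤ t → t < b → f t = ⊤) → b ≤ a := by
    intro a b ha hzero_a htop_b
    by_contra! hab
    have h0 := hzero_a ((a + b) / 2) (by linarith)
    rw [htop_b _ (by linarith) (by linarith)] at h0
    exact ENNReal.top_ne_zero h0
  set Z := {t | 0 ≤ t ∧ f t = 0}
  have hZ : BddBelow Z := ⟨0, fun t ht => ht.1⟩
  have hs0 : 0 ≤ sInf Z := le_csInf hzero fun t ht => ht.1
  have htop_inf : ∀ t, 0 ≤ t → t < sInf Z → f t = ⊤ := by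
    intro t ht0 hts
    have hmid : f ((t + sInf Z) / 2) ≠ 0 := fun h =>
      (csInf_le hZ ⟨by linarith, h⟩).not_gt (by linarith)
    exact (hf _ _ (by linarith)).resolve_right hmid
  have hzero_inf : ∀ t, sInf Z < t → f t = 0 := by
    intro t hst
    obtain ⟨t₀, ⟨-, ht₀⟩, ht₀t⟩ := exists_lt_of_csInf_lt hzero hst
    exact (hf _ _ ht₀t).resolve_left (ht₀ ▸ ENNReal.zero_ne_top)
  refine ⟨sInf Z, ⟨hs0, htop_inf, hzero_inf⟩, fun s ⟨hs, htop_s, hzero_s⟩ => ?_⟩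
  exact le_antisymm (le_of_critical _ _ hs0 hzero_inf htop_s)
    (le_of_critical _ _ hs hzero_s htop_inf)

lemma ENNReal.liminf_eq_top_or_liminf_eq_zero {u v : ℕ → ℝ≥0∞} {q : ℝ≥0∞} (hq : q < 1)
    (h : ∀ k, u k ≤ q ^ k * v k) : liminf v atTop = ⊤ ∨ liminf u atTop = 0 := by
  refine or_iff_not_imp_left.2 fun hv => nonpos_iff_eq_zero.1 ?_
  have hq0 : limsup (q ^ ·) atTop = 0 :=
    (ENNReal.tendsto_pow_atTop_nhds_zero_of_lt_one hq).limsup_eq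
  calc liminf u atTop ≤ liminf ((q ^ ·) * v) atTop := liminf_le_liminf (Eventually.of_forall h)
    _ ≤ limsup (q ^ ·) atTop * liminf v atTop :=
      ENNReal.liminf_mul_le (.inr hv) (.inl (hq0 ▸ ENNReal.zero_ne_top))
    _ = 0 := by rw [hq0, zero_mul]

lemma exists_pos_lt_one_forall_le {ι : Type*} [Finite ι] {r : ι → ℝ} (hr : ∀ j, r j < 1) :
    ∃ R, 0 < R ∧ R < 1 ∧ ∀ j, r j ≤ R := by
  have hbound : ∀ᶠ R in 𝓝[<] (1 : ℝ), ∀ j, r j ≤ R :=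
    eventually_all.2 fun j =>
      nhdsWithin_le_nhds ((eventually_gt_nhds (hr j)).mono fun _ => le_of_lt)
  obtain ⟨R, hR, hR0, hR1⟩ := (hbound.and (Ioo_mem_nhdsLT one_pos)).exists
  exact ⟨R, hR0, hR1, hR⟩

lemma card_Lk_le {m : ℕ} (N : ℕ → Finset (Fin m)) (k : ℕ) : (Lk N k).card ≤ m ^ k := by
  simpa using Finset.card_le_univ (Lk N k)

section RatioPowSum

variable {m : ℕ} {r : Fin m → ℝ} {R : ℝ}

noncomputable def ratioPowSum (r : Fin m → ℝ) (N : ℕ → Finset (Fin m)) (t : ℝ) (k : ℕ) : ℝ≥0∞ :=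
  ∑ j ∈ Lk N k, ENNReal.ofReal ((∏ i, r (j i)) ^ t)

lemma ratioPowSum_zero (N : ℕ → Finset (Fin m)) (k : ℕ) :
    ratioPowSum r N 0 k = (Lk N k).card := by
  simp [ratioPowSum]

lemma prod_rpow_le_pow (hr : ∀ j, 0 < r j) (hR : ∀ j, r j ≤ R) {δ : ℝ} (hδ : 0 ≤ δ) {k : ℕ}
    (j : Fin k → Fin m) : (∏ i, r (j i)) ^ δ ≤ (R ^ δ) ^ k := by
  rw [← Real.finsetProd_rpow _ _ fun i _ => (hr (j i)).le]
  calc ∏ i, r (j i) ^ δ ≤ ∏ _i : Fin k, R ^ δ :=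
        Finset.prod_le_prod (fun i _ => Real.rpow_nonneg (hr (j i)).le δ) fun i _ =>
          Real.rpow_le_rpow (hr (j i)).le (hR (j i)) hδ
    _ = (R ^ δ) ^ k := by simp

lemma ratioPowSum_add_le (hr : ∀ j, 0 < r j) (hR0 : 0 ≤ R) (hR : ∀ j, r j ≤ R)
    (N : ℕ → Finset (Fin m)) (t : ℝ) {δ : ℝ} (hδ : 0 ≤ δ) (k : ℕ) :
    ratioPowSum r N (t + δ) k ≤ ENNReal.ofReal (R ^ δ) ^ k * ratioPowSum r N t k := by
  simp only [ratioPowSum, Finset.mul_sum]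
  refine Finset.sum_le_sum fun j _ => ?_
  have hP : 0 < ∏ i, r (j i) := Finset.prod_pos fun i _ => hr (j i)
  rw [Real.rpow_add hP, ENNReal.ofReal_mul (by positivity), mul_comm,
    ← ENNReal.ofReal_pow (by positivity)]
  gcongr
  exact prod_rpow_le_pow hr hR hδ j

lemma ratioPowSum_le (hr : ∀ j, 0 < r j) (hR0 : 0 ≤ R) (hR : ∀ j, r j ≤ R)
    (N : ℕ → Finset (Fin m)) {t : ℝ} (ht : 0 ≤ t) (k : ℕ) :
    ratioPowSum r N t k ≤ ENNReal.ofReal (m * R ^ t) ^ k :=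
  calc ratioPowSum r N t k = ratioPowSum r N (0 + t) k := by rw [zero_add]
    _ ≤ ENNReal.ofReal (R ^ t) ^ k * ratioPowSum r N 0 k := ratioPowSum_add_le hr hR0 hR N 0 ht k
    _ ≤ ENNReal.ofReal (R ^ t) ^ k * (m ^ k : ℕ) := by
      rw [ratioPowSum_zero]
      gcongr
      exact_mod_cast card_Lk_le N k
    _ = ENNReal.ofReal (m * R ^ t) ^ k := by
      rw [ENNReal.ofReal_mul m.cast_nonneg, ENNReal.ofReal_natCast, mul_pow, mul_comm,
        Nat.cast_pow]

lemma liminf_ratioPowSum_eq_top_or_eq_zero (hr : ∀ j, 0 < r j ∧ r j < 1) (N : ℕ → Finset (Fin m))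
    (t t' : ℝ) (h : t < t') :
    liminf (ratioPowSum r N t) atTop = ⊤ ∨ liminf (ratioPowSum r N t') atTop = 0 := by
  obtain ⟨R, hR0, hR1, hR⟩ := exists_pos_lt_one_forall_le fun j => (hr j).2
  have hδ : 0 < t' - t := sub_pos.2 h
  refine ENNReal.liminf_eq_top_or_liminf_eq_zero
    (ENNReal.ofReal_lt_one.2 (Real.rpow_lt_one hR0.le hR1 hδ)) fun k => ?_
  simpa using ratioPowSum_add_le (fun j => (hr j).1) hR0.le hR N t hδ.le k

lemma exists_liminf_ratioPowSum_eq_zero (hr : ∀ j, 0 < r j ∧ r j < 1) (N : ℕ → Finset (Fin m)) :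
    ∃ t, 0 ≤ t ∧ liminf (ratioPowSum r N t) atTop = 0 := by
  obtain ⟨R, hR0, hR1, hR⟩ := exists_pos_lt_one_forall_le fun j => (hr j).2
  have hdecay : Tendsto (fun t : ℝ => m * R ^ t) atTop (𝓝 0) := by
    simpa using (tendsto_rpow_atTop_of_base_lt_one R (by linarith) hR1).const_mul (m : ℝ)
  obtain ⟨t, ht0, hlt⟩ := ((eventually_ge_atTop 0).and (hdecay.eventually_lt_const one_pos)).exists
  refine ⟨t, ht0, nonpos_iff_eq_zero.1 ?_⟩
  calc liminf (ratioPowSum r N t) atTop ≤ liminf (ENNReal.ofReal (m * R ^ t) ^ ·) atTop :=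
        liminf_le_liminf (Eventually.of_forall (ratioPowSum_le (fun j => (hr j).1) hR0.le hR N ht0))
    _ = 0 := (ENNReal.tendsto_pow_atTop_nhds_zero_of_lt_one (ENNReal.ofReal_lt_one.2 hlt)).liminf_eq

end RatioPowSum

theorem stmt5_general {m : ℕ} (r : Fin m → ℝ) (hr : ∀ j, 0 < r j ∧ r j < 1)
    (N : ℕ → Finset (Fin m)) :
    ∃! s : ℝ, 0 ≤ s ∧
      (∀ t : ℝ, 0 ≤ t → t < s →
        liminf (fun k => ∑ j ∈ Lk N k, ENNReal.ofReal ((∏ i, r (j i)) ^ t)) atTop = ⊤) ∧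
      (∀ t : ℝ, s < t →
        liminf (fun k => ∑ j ∈ Lk N k, ENNReal.ofReal ((∏ i, r (j i)) ^ t)) atTop = 0) :=
  existsUnique_critical_exponent (liminf_ratioPowSum_eq_top_or_eq_zero hr N)
    (exists_liminf_ratioPowSum_eq_zero hr N)

/-- There exists a unique `s ≥ 0` such that
`liminf_{k→∞} ∑_{(j_1,…,j_k) ∈ L^k} (r_{j_1}⋯r_{j_k})^t` is `∞` for `0 ≤ t < s`
and `0` for `t > s`. -/
theorem stmt5 {m : ℕ} (r : Fin m → ℝ) (hr : ∀ j, 0 < r j ∧ r j < 1)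
    (N : ℕ → Finset (Fin m)) (hN : ∀ k, 1 ≤ k → (N k).Nonempty) :
    ∃! s : ℝ, 0 ≤ s ∧
      (∀ t : ℝ, 0 ≤ t → t < s →
        liminf (fun k => ∑ j ∈ Lk N k, ENNReal.ofReal ((∏ i, r (j i)) ^ t)) atTop = ⊤) ∧
      (∀ t : ℝ, s < t →
        liminf (fun k => ∑ j ∈ Lk N k, ENNReal.ofReal ((∏ i, r (j i)) ^ t)) atTop = 0) :=
  stmt5_general r hr N
end

section
/- Suppose the open set condition holds with bounded open set V. Then for every tree P, the sets {V_{j_1…j_k} : (j_1,…,j_k) ∈ P} are pairwise disjoint. -/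
open Metric Filter Set

/-- Two finite sequences agree on their common initial segment. -/
def AgreesWith {m : ℕ} (x y : (k : ℕ) × (Fin k → Fin m)) : Prop :=
  ∀ (q : ℕ) (hx : q < x.1) (hy : q < y.1), x.2 ⟨q, hx⟩ = y.2 ⟨q, hy⟩

/-- A finite set `P` of finite sequences (elements of `K = ⋃_k L^k`) is a tree if every
sequence `(j_1,…,j_k) ∈ K` agrees with some `(i_1,…,i_p) ∈ P` on the first `min {k,p}`
places, and moreover this element of `P` is unique among those with `p ≤ k`. -/
def IsTree {m : ℕ} (N : ℕ → Finset (Fin m)) (P : Finset ((k : ℕ) × (Fin k → Fin m))) :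
    Prop :=
  (∀ x ∈ P, 1 ≤ x.1 ∧ ∀ i : Fin x.1, x.2 i ∈ N (i + 1)) ∧
  ∀ k : ℕ, 1 ≤ k → ∀ j : Fin k → Fin m, (∀ i : Fin k, j i ∈ N (i + 1)) →
    (∃ y ∈ P, AgreesWith ⟨k, j⟩ y) ∧
    ∀ y ∈ P, y.1 ≤ k → AgreesWith ⟨k, j⟩ y →
      ∀ y' ∈ P, y'.1 ≤ k → AgreesWith ⟨k, j⟩ y' → y = y'

/- Two sequences that do not agree on their common initial segment first differ at some
place `q`. Before `q` they apply the same similitudes, which are injective and so preserve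
disjointness; from `q` on, the images lie in `ψ_i(V)` and `ψ_j(V)` with `i ≠ j`, since every
`V_{j_1…j_k}` lies in `V`. Two distinct elements of a tree never agree on their common initial
segment, as the shorter one would be a second element of the tree agreeing with the longer one. -/

theorem injective_of_dist_eq_mul {X Y : Type*} [MetricSpace X] [PseudoMetricSpace Y] {f : X → Y}
    {r : ℝ} (hf : ∀ x y, dist (f x) (f y) = r * dist x y) (hr : 0 < r) : Function.Injective f := by
  intro x y hxy
  have h : r * dist x y = 0 := by rw [← hf, hxy, dist_self]
  exact dist_eq_zero.1 ((mul_eq_zero.1 h).resolve_left hr.ne')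

theorem AgreesWith.symm {m : ℕ} {x y : (k : ℕ) × (Fin k → Fin m)} (h : AgreesWith x y) :
    AgreesWith y x :=
  fun q hy hx => (h q hx hy).symm

theorem agreesWith_succ_iff {m k k' : ℕ} (j : Fin (k + 1) → Fin m) (j' : Fin (k' + 1) → Fin m) :
    AgreesWith ⟨k + 1, j⟩ ⟨k' + 1, j'⟩ ↔
      j 0 = j' 0 ∧ AgreesWith ⟨k, Fin.tail j⟩ ⟨k', Fin.tail j'⟩ := by
  constructor
  · intro h
    exact ⟨h 0 k.succ_pos k'.succ_pos,
      fun q hq hq' => h (q + 1) (Nat.succ_lt_succ hq) (Nat.succ_lt_succ hq')⟩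
  · rintro ⟨h0, htail⟩ (_ | q) hq hq'
    · exact h0
    · exact htail q (Nat.lt_of_succ_lt_succ hq) (Nat.lt_of_succ_lt_succ hq')

section iterMap

variable {X : Type*} {m : ℕ} {ψ : Fin m → X → X}

theorem iterMap_succ_image (k : ℕ) (j : Fin (k + 1) → Fin m) (s : Set X) :
    iterMap ψ (k + 1) j '' s = ψ (j 0) '' (iterMap ψ k (Fin.tail j) '' s) := by
  rw [iterMap, image_comp]
  rfl

theorem iterMap_image_subset {V : Set X} (hmap : ∀ j, ψ j '' V ⊆ V) :
    ∀ (k : ℕ) (j : Fin k → Fin m), iterMap ψ k j '' V ⊆ V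
  | 0, _ => by simp [iterMap]
  | k + 1, j => by
    rw [iterMap_succ_image]
    exact (image_mono (iterMap_image_subset hmap k _)).trans (hmap _)

theorem disjoint_iterMap_image_of_not_agreesWith {V : Set X}
    (hinj : ∀ j, Function.Injective (ψ j)) (hmap : ∀ j, ψ j '' V ⊆ V)
    (hdisj : ∀ i j, i ≠ j → Disjoint (ψ i '' V) (ψ j '' V)) :
    ∀ {k k' : ℕ} (j : Fin k → Fin m) (j' : Fin k' → Fin m),
      ¬ AgreesWith ⟨k, j⟩ ⟨k', j'⟩ → Disjoint (iterMap ψ k j '' V) (iterMap ψ k' j' '' V)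
  | 0, _, _, _, h => absurd (fun q hq _ => absurd hq q.not_lt_zero) h
  | _ + 1, 0, _, _, h => absurd (fun q _ hq => absurd hq q.not_lt_zero) h
  | k + 1, k' + 1, j, j', h => by
    rw [iterMap_succ_image, iterMap_succ_image]
    by_cases h0 : j 0 = j' 0
    · have htail : ¬ AgreesWith ⟨k, Fin.tail j⟩ ⟨k', Fin.tail j'⟩ :=
        fun htail => h ((agreesWith_succ_iff j j').2 ⟨h0, htail⟩)
      rw [h0, disjoint_image_iff (hinj _)]
      exact disjoint_iterMap_image_of_not_agreesWith hinj hmap hdisj _ _ htail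
    · exact (hdisj _ _ h0).mono (image_mono (iterMap_image_subset hmap _ _))
        (image_mono (iterMap_image_subset hmap _ _))

end iterMap

theorem IsTree.eq_of_agreesWith_of_le {m : ℕ} {N : ℕ → Finset (Fin m)}
    {P : Finset ((k : ℕ) × (Fin k → Fin m))} (hP : IsTree N P) {x y : (k : ℕ) × (Fin k → Fin m)}
    (hx : x ∈ P) (hy : y ∈ P) (hle : x.1 ≤ y.1) (h : AgreesWith x y) : x = y := by
  obtain ⟨hy1, hyN⟩ := hP.1 y hy
  exact (hP.2 y.1 hy1 y.2 hyN).2 x hx hle h.symm y hy le_rfl fun _ _ _ => rfl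

theorem IsTree.not_agreesWith {m : ℕ} {N : ℕ → Finset (Fin m)}
    {P : Finset ((k : ℕ) × (Fin k → Fin m))} (hP : IsTree N P) {x y : (k : ℕ) × (Fin k → Fin m)}
    (hx : x ∈ P) (hy : y ∈ P) (hxy : x ≠ y) : ¬ AgreesWith x y := by
  intro h
  rcases le_total x.1 y.1 with hle | hle
  · exact hxy (hP.eq_of_agreesWith_of_le hx hy hle h)
  · exact hxy (hP.eq_of_agreesWith_of_le hy hx hle h.symm).symm

theorem stmt8_general {n m : ℕ}
    (ψ : Fin m → EuclideanSpace ℝ (Fin n) → EuclideanSpace ℝ (Fin n)) (r : Fin m → ℝ)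
    (hψ : ∀ j x y, dist (ψ j x) (ψ j y) = r j * dist x y)
    (hr : ∀ j, 0 < r j ∧ r j < 1)
    (N : ℕ → Finset (Fin m))
    (V : Set (EuclideanSpace ℝ (Fin n)))
    (hmap : ∀ j, ψ j '' V ⊆ V)
    (hdisj : ∀ i j, i ≠ j → Disjoint (ψ i '' V) (ψ j '' V))
    (P : Finset ((k : ℕ) × (Fin k → Fin m))) (hP : IsTree N P) :
    ∀ x ∈ P, ∀ y ∈ P, x ≠ y →
      Disjoint (iterMap ψ x.1 x.2 '' V) (iterMap ψ y.1 y.2 '' V) := by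
  intro x hx y hy hxy
  have hinj : ∀ j, Function.Injective (ψ j) := fun j => injective_of_dist_eq_mul (hψ j) (hr j).1
  exact disjoint_iterMap_image_of_not_agreesWith hinj hmap hdisj x.2 y.2
    (hP.not_agreesWith hx hy hxy)

/-- Under the open set condition, for every tree `P` the sets
`{V_{j_1…j_k} : (j_1,…,j_k) ∈ P}` are pairwise disjoint. -/
theorem stmt8 {n m : ℕ}
    (ψ : Fin m → EuclideanSpace ℝ (Fin n) → EuclideanSpace ℝ (Fin n)) (r : Fin m → ℝ)
    (hψ : ∀ j x y, dist (ψ j x) (ψ j y) = r j * dist x y)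
    (hr : ∀ j, 0 < r j ∧ r j < 1)
    (N : ℕ → Finset (Fin m)) (hN : ∀ k, 1 ≤ k → (N k).Nonempty)
    (V : Set (EuclideanSpace ℝ (Fin n))) (hVo : IsOpen V)
    (hVb : Bornology.IsBounded V) (hVne : V.Nonempty)
    (hmap : ∀ j, ψ j '' V ⊆ V)
    (hdisj : ∀ i j, i ≠ j → Disjoint (ψ i '' V) (ψ j '' V))
    (P : Finset ((k : ℕ) × (Fin k → Fin m))) (hP : IsTree N P) :
    ∀ x ∈ P, ∀ y ∈ P, x ≠ y →
      Disjoint (iterMap ψ x.1 x.2 '' V) (iterMap ψ y.1 y.2 '' V) :=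
  stmt8_general ψ r hψ hr N V hmap hdisj P hP
end

section
/- For Lebesgue-almost every a ∈ [0,1], f_a(k)/k → 1/3 as k → ∞, where, writing a = 0.a_1a_2a_3… for the triadic expansion of a, f_a(k) is the number of indices i ≤ k such that either a_i = 0 and a_1 + ⋯ + a_{i−1} is even, or a_i = 2 and a_1 + ⋯ + a_{i−1} is odd (with the empty sum for i = 1 taken to be 0). -/
open MeasureTheory Filter Set

/-- The `i`-th digit (for `i ≥ 1`) of the triadic expansion `a = 0.a_1a_2a_3…`. -/
noncomputable def triadicDigit (a : ℝ) (i : ℕ) : ℕ := (⌊3 ^ i * a⌋ % 3).toNat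

/-- `f_a(k)` is the number of indices `i ≤ k` such that either `a_i = 0` and
`a_1 + ⋯ + a_{i-1}` is even, or `a_i = 2` and `a_1 + ⋯ + a_{i-1}` is odd. -/
noncomputable def fCount (a : ℝ) (k : ℕ) : ℕ :=
  ((Finset.Icc 1 k).filter fun i =>
    (triadicDigit a i = 0 ∧ Even (∑ l ∈ Finset.Ico 1 i, triadicDigit a l)) ∨
    (triadicDigit a i = 2 ∧ Odd (∑ l ∈ Finset.Ico 1 i, triadicDigit a l))).card

/-! ### Auxiliary combinatorics -/

def bcond (d : ℕ → ℕ) (i : ℕ) : Prop :=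
  (d i = 0 ∧ Even (∑ l ∈ Finset.Ico 1 i, d l)) ∨
  (d i = 2 ∧ Odd (∑ l ∈ Finset.Ico 1 i, d l))

instance (d : ℕ → ℕ) (i : ℕ) : Decidable (bcond d i) := by unfold bcond; infer_instance

def idig (n m l : ℕ) : ℕ := m / 3 ^ (n - l) % 3

lemma idig_step (n m l : ℕ) (hl : l ≤ n - 1) (hn : 1 ≤ n) :
    idig n m l = idig (n - 1) (m / 3) l := by
  unfold idig
  have : n - l = (n - 1 - l) + 1 := by omega
  rw [this, pow_succ, Nat.mul_comm, ← Nat.div_div_eq_div_mul]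

lemma idig_last (n m : ℕ) : idig n m n = m % 3 := by unfold idig; simp

lemma bcond_congr' {d d' : ℕ → ℕ} {i : ℕ} (hi : 1 ≤ i) (h : ∀ l, 1 ≤ l → l ≤ i → d l = d' l) :
    bcond d i ↔ bcond d' i := by
  unfold bcond
  have hs : ∑ l ∈ Finset.Ico 1 i, d l = ∑ l ∈ Finset.Ico 1 i, d' l := by
    apply Finset.sum_congr rfl
    intro l hl
    rw [Finset.mem_Ico] at hl
    exact h l hl.1 (by omega)
  rw [hs, h i hi le_rfl]

lemma bcond_idig_step {n i m : ℕ} (hi1 : 1 ≤ i) (hi : i ≤ n - 1) (hn : 1 ≤ n) :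
    bcond (idig n m) i ↔ bcond (idig (n - 1) (m / 3)) i :=
  bcond_congr' hi1 (fun l _ hl2 => idig_step n m l (by omega) hn)

/-- the unique last digit making `bcond` hold at the top position -/
def etop (n q : ℕ) : ℕ :=
  if Even (∑ l ∈ Finset.Ico 1 n, idig (n - 1) q l) then 0 else 2

lemma etop_lt (n q : ℕ) : etop n q < 3 := by unfold etop; split <;> norm_num

lemma bcond_top (n m : ℕ) (hn : 1 ≤ n) :
    bcond (idig n m) n ↔ m % 3 = etop n (m / 3) := by
  have hsum : ∑ l ∈ Finset.Ico 1 n, idig n m l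
      = ∑ l ∈ Finset.Ico 1 n, idig (n - 1) (m / 3) l := by
    apply Finset.sum_congr rfl
    intro l hl
    rw [Finset.mem_Ico] at hl
    exact idig_step n m l (by omega) hn
  unfold bcond etop
  rw [idig_last, hsum]
  by_cases hS : Even (∑ l ∈ Finset.Ico 1 n, idig (n - 1) (m / 3) l)
  · simp [hS, Nat.not_odd_iff_even.mpr hS]
  · simp [hS, Nat.not_even_iff_odd.mp hS]

lemma div3 (q r : ℕ) (hr : r < 3) : (3 * q + r) / 3 = q ∧ (3 * q + r) % 3 = r := by
  constructor
  · rw [Nat.mul_add_div (by norm_num)]; omega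
  · rw [Nat.mul_add_mod]; omega

lemma L2 (n : ℕ) (hn : 1 ≤ n) (p p' : ℕ → Prop) [DecidablePred p] [DecidablePred p']
    (e : ℕ → ℕ) (he : ∀ q, e q < 3)
    (h : ∀ m < 3 ^ n, (p m ↔ p' (m / 3) ∧ m % 3 = e (m / 3))) :
    ((Finset.range (3 ^ n)).filter p).card = ((Finset.range (3 ^ (n - 1))).filter p').card := by
  apply Finset.card_nbij' (i := fun m => m / 3) (j := fun q => 3 * q + e q)
  · intro m hm
    simp only [Finset.mem_coe, Finset.mem_filter, Finset.mem_range] at hm ⊢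
    obtain ⟨hm1, hm2⟩ := hm
    have := (h m hm1).1 hm2
    refine ⟨?_, this.1⟩
    have h3 : 3 ^ n = 3 ^ (n - 1) * 3 := by
      rw [← pow_succ]; congr 1; omega
    omega
  · intro q hq
    simp only [Finset.mem_coe, Finset.mem_filter, Finset.mem_range] at hq ⊢
    obtain ⟨hq1, hq2⟩ := hq
    obtain ⟨hq3, hq4⟩ := div3 q (e q) (he q)
    have hlt : 3 * q + e q < 3 ^ n := by
      have h3 : 3 ^ n = 3 ^ (n - 1) * 3 := by rw [← pow_succ]; congr 1; omega
      have := he q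
      omega
    refine ⟨hlt, ?_⟩
    rw [h _ hlt, hq3, hq4]
    exact ⟨hq2, rfl⟩
  · intro m hm
    simp only [Finset.mem_coe, Finset.mem_filter, Finset.mem_range] at hm
    have := ((h m hm.1).1 hm.2).2
    dsimp only
    omega
  · intro q hq
    exact (div3 q (e q) (he q)).1

lemma L1 (n : ℕ) (hn : 1 ≤ n) (p p' : ℕ → Prop) [DecidablePred p] [DecidablePred p']
    (h : ∀ m < 3 ^ n, (p m ↔ p' (m / 3))) :
    ((Finset.range (3 ^ n)).filter p).card = 3 * ((Finset.range (3 ^ (n - 1))).filter p').card := by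
  have h3 : 3 ^ n = 3 ^ (n - 1) * 3 := by rw [← pow_succ]; congr 1; omega
  have key : (Finset.range (3 ^ n)).filter p =
      ((Finset.range (3 ^ (n-1))).filter p').biUnion
        (fun q => {3 * q, 3 * q + 1, 3 * q + 2}) := by
    ext m
    simp only [Finset.mem_filter, Finset.mem_range, Finset.mem_biUnion, Finset.mem_insert,
      Finset.mem_singleton]
    constructor
    · rintro ⟨hm1, hm2⟩
      exact ⟨m / 3, ⟨by omega, (h m hm1).1 hm2⟩, by omega⟩
    · rintro ⟨q, ⟨hq1, hq2⟩, hm⟩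
      have hmlt : m < 3 ^ n := by omega
      refine ⟨hmlt, (h m hmlt).2 ?_⟩
      have : m / 3 = q := by omega
      rwa [this]
  have hdisj : ∀ q1 ∈ (Finset.range (3 ^ (n-1))).filter p',
      ∀ q2 ∈ (Finset.range (3 ^ (n-1))).filter p', q1 ≠ q2 →
      Disjoint ({3 * q1, 3 * q1 + 1, 3 * q1 + 2} : Finset ℕ) {3 * q2, 3 * q2 + 1, 3 * q2 + 2} := by
    intro q1 _ q2 _ hne
    simp only [Finset.disjoint_left, Finset.mem_insert, Finset.mem_singleton]
    intro m hm1 hm2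
    omega
  have hcard : ∀ q ∈ (Finset.range (3 ^ (n-1))).filter p',
      ({3 * q, 3 * q + 1, 3 * q + 2} : Finset ℕ).card = 3 := by
    intro q _
    rw [Finset.card_insert_of_notMem (by simp), Finset.card_insert_of_notMem (by simp),
      Finset.card_singleton]
  rw [key, Finset.card_biUnion hdisj, Finset.sum_congr rfl hcard, Finset.sum_const,
    smul_eq_mul, Nat.mul_comm]

lemma countA (i : ℕ) (hi1 : 1 ≤ i) : ∀ (n : ℕ), i ≤ n →
    ((Finset.range (3 ^ n)).filter (fun m => bcond (idig n m) i)).card = 3 ^ (n - 1) := by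
  intro n hn
  induction n, hn using Nat.le_induction with
  | base =>
    rw [L2 i (by omega) _ (fun _ => True) (etop i) (etop_lt i)
      (fun m _ => by rw [bcond_top i m (by omega)]; simp)]
    rw [Finset.filter_true_of_mem (fun _ _ => trivial), Finset.card_range]
  | succ n hn IH =>
    have h1 : (1:ℕ) ≤ n := le_trans hi1 hn
    rw [L1 (n + 1) (by omega) _ (fun q => bcond (idig n q) i)
      (fun m _ => by
        have := bcond_idig_step (n := n + 1) (i := i) (m := m) hi1 (by omega) (by omega)
        simpa using this)]
    simp only [Nat.add_sub_cancel]
    rw [IH]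
    conv_rhs => rw [show n = (n - 1) + 1 by omega]
    rw [pow_succ]
    ring

lemma countB (i j : ℕ) (hi : 1 ≤ i) (hij : i < j) :
    ((Finset.range (3 ^ j)).filter
      (fun m => bcond (idig j m) i ∧ bcond (idig j m) j)).card = 3 ^ (j - 2) := by
  rw [L2 j (by omega) _ (fun q => bcond (idig (j - 1) q) i) (etop j) (etop_lt j)
    (fun m _ => by
      rw [bcond_top j m (by omega), bcond_idig_step (n := j) (i := i) (m := m) hi (by omega)
        (by omega)])]
  rw [countA i hi (j - 1) (by omega)]
  congr 1

/-! ### The distribution of triadic digits -/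

lemma triadicDigit_eq_idig {n m i : ℕ} (hi1 : 1 ≤ i) (hi : i ≤ n) {a : ℝ}
    (ha : (m : ℝ) / 3 ^ n ≤ a) (ha2 : a < (m + 1) / 3 ^ n) :
    triadicDigit a i = idig n m i := by
  set q := m / 3 ^ (n - i) with hq
  have h3 : (3 : ℝ) ^ n = 3 ^ i * 3 ^ (n - i) := by
    rw [← pow_add]; congr 1; omega
  have hpow_pos : (0:ℝ) < 3 ^ (n - i) := by positivity
  have hpow_pos' : (0:ℝ) < 3 ^ n := by positivity
  have hfloor : ⌊3 ^ i * a⌋ = (q : ℤ) := by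
    rw [Int.floor_eq_iff]
    constructor
    · have h1 : (q : ℝ) * 3 ^ (n - i) ≤ m := by
        exact_mod_cast Nat.div_mul_le_self m (3 ^ (n - i))
      have h2 : (q : ℝ) ≤ (m : ℝ) / 3 ^ (n - i) := by
        rw [le_div_iff₀ hpow_pos]; exact h1
      have h4 : (m : ℝ) / 3 ^ (n - i) = 3 ^ i * ((m : ℝ) / 3 ^ n) := by
        rw [h3]; field_simp
      calc ((q : ℕ) : ℝ) ≤ (m : ℝ) / 3 ^ (n - i) := by exact_mod_cast h2
        _ = 3 ^ i * ((m : ℝ) / 3 ^ n) := h4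
        _ ≤ 3 ^ i * a := by gcongr
    · have h1 : (m : ℝ) + 1 ≤ ((q : ℝ) + 1) * 3 ^ (n - i) := by
        have : m + 1 ≤ (q + 1) * 3 ^ (n - i) := by
          have h5 := Nat.mod_lt m (show 0 < 3 ^ (n - i) by positivity)
          have h6 := Nat.div_add_mod m (3 ^ (n - i))
          have h7 : (m / 3 ^ (n - i) + 1) * 3 ^ (n - i)
              = 3 ^ (n - i) * (m / 3 ^ (n - i)) + 3 ^ (n - i) := by ring
          rw [hq, h7]
          omega
        exact_mod_cast this
      have h4 : ((m : ℝ) + 1) / 3 ^ n = (((m : ℝ) + 1) / 3 ^ (n - i)) / 3 ^ i := by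
        rw [h3, mul_comm ((3:ℝ) ^ i), ← div_div]
      calc 3 ^ i * a < 3 ^ i * (((m : ℝ) + 1) / 3 ^ n) := by gcongr
        _ = ((m : ℝ) + 1) / 3 ^ (n - i) := by rw [h4]; field_simp
        _ ≤ (q : ℝ) + 1 := by rw [div_le_iff₀ hpow_pos]; linarith [h1]
  unfold triadicDigit idig
  rw [hfloor]
  omega

lemma meas_digit_event (n : ℕ) (P : (ℕ → ℕ) → Prop) [DecidablePred P]
    (hP : ∀ d d' : ℕ → ℕ, (∀ l, 1 ≤ l → l ≤ n → d l = d' l) → (P d ↔ P d')) :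
    volume.restrict (Set.Icc (0:ℝ) 1) {a | P (triadicDigit a)} =
      (((Finset.range (3 ^ n)).filter (fun m => P (idig n m))).card : ENNReal) / 3 ^ n := by
  classical
  have h3pos : (0:ℝ) < 3 ^ n := by positivity
  rw [Measure.restrict_apply' measurableSet_Icc]
  have hae : ({a | P (triadicDigit a)} ∩ Set.Icc (0:ℝ) 1 : Set ℝ)
      =ᵐ[volume] ({a | P (triadicDigit a)} ∩ Set.Ico (0:ℝ) 1 : Set ℝ) :=
    (Filter.EventuallyEq.refl _ _).inter Ico_ae_eq_Icc.symm
  rw [measure_congr hae]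
  have hset : {a | P (triadicDigit a)} ∩ Set.Ico (0:ℝ) 1 =
      ⋃ m ∈ (Finset.range (3 ^ n)).filter (fun m => P (idig n m)),
        Set.Ico ((m : ℝ) / 3 ^ n) ((m + 1) / 3 ^ n) := by
    ext a
    simp only [Set.mem_inter_iff, Set.mem_setOf_eq, Set.mem_Ico, Set.mem_iUnion,
      Finset.mem_filter, Finset.mem_range, exists_prop]
    constructor
    · rintro ⟨hPa, h0, h1⟩
      have hfl0 : (0:ℤ) ≤ ⌊3 ^ n * a⌋ := Int.floor_nonneg.mpr (by positivity)
      set M := ⌊3 ^ n * a⌋.toNat with hM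
      have hMfl : (M : ℤ) = ⌊3 ^ n * a⌋ := Int.toNat_of_nonneg hfl0
      have hMle : (M : ℝ) ≤ 3 ^ n * a := by
        have := Int.floor_le (3 ^ n * a)
        rw [← hMfl] at this
        exact_mod_cast this
      have hMlt : 3 ^ n * a < (M : ℝ) + 1 := by
        have := Int.lt_floor_add_one (3 ^ n * a)
        rw [← hMfl] at this
        exact_mod_cast this
      have hlow : (M : ℝ) / 3 ^ n ≤ a := by rw [div_le_iff₀ h3pos]; linarith [hMle]
      have hhigh : a < ((M : ℝ) + 1) / 3 ^ n := by rw [lt_div_iff₀ h3pos]; linarith [hMlt]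
      have hMlt3 : M < 3 ^ n := by
        have : (M : ℝ) < 3 ^ n := by nlinarith
        exact_mod_cast this
      refine ⟨M, ⟨hMlt3, ?_⟩, hlow, by exact_mod_cast hhigh⟩
      exact (hP _ _ (fun l hl1 hl2 => triadicDigit_eq_idig hl1 hl2 hlow hhigh)).1 hPa
    · rintro ⟨m, ⟨hmlt, hPm⟩, hlow, hhigh⟩
      have hhigh' : a < ((m : ℝ) + 1) / 3 ^ n := by exact_mod_cast hhigh
      refine ⟨(hP _ _ (fun l hl1 hl2 => triadicDigit_eq_idig hl1 hl2 hlow hhigh')).2 hPm,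
        le_trans (by positivity) hlow, ?_⟩
      have : ((m : ℝ) + 1) / 3 ^ n ≤ 1 := by
        rw [div_le_one h3pos]
        have : (m : ℝ) + 1 ≤ 3 ^ n := by exact_mod_cast Nat.succ_le_of_lt hmlt
        linarith
      linarith
  rw [hset, measure_biUnion_finset]
  · have hvol : ∀ m ∈ (Finset.range (3 ^ n)).filter (fun m => P (idig n m)),
        volume (Set.Ico ((m : ℝ) / 3 ^ n) (((m : ℕ) + 1) / 3 ^ n)) = (3 ^ n : ENNReal)⁻¹ := by
      intro m _
      rw [Real.volume_Ico]
      have : ((m : ℕ) + 1 : ℝ) / 3 ^ n - (m : ℝ) / 3 ^ n = (3 ^ n : ℝ)⁻¹ := by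
        field_simp
        ring
      rw [this, ENNReal.ofReal_inv_of_pos h3pos,
        ENNReal.ofReal_pow (by norm_num : (0:ℝ) ≤ 3)]
      norm_num
    rw [Finset.sum_congr rfl hvol, Finset.sum_const, nsmul_eq_mul,
      div_eq_mul_inv]
  · intro m1 hm1 m2 hm2 hne
    apply Set.disjoint_left.mpr
    intro x hx1 hx2
    simp only [Set.mem_Ico] at hx1 hx2
    rcases Nat.lt_or_ge m1 m2 with h | h
    · have : ((m1 : ℝ) + 1) / 3 ^ n ≤ (m2 : ℝ) / 3 ^ n := by
        gcongr
        exact_mod_cast Nat.succ_le_of_lt h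
      linarith [hx1.2, hx2.1]
    · have hlt : m2 < m1 := by omega
      have : ((m2 : ℝ) + 1) / 3 ^ n ≤ (m1 : ℝ) / 3 ^ n := by
        gcongr
        exact_mod_cast Nat.succ_le_of_lt hlt
      linarith [hx1.1, hx2.2]
  · intro m _
    exact measurableSet_Ico

/-! ### Probability glue -/

open ProbabilityTheory

def Aset (i : ℕ) : Set ℝ := {a | bcond (triadicDigit a) i}

lemma measurable_triadicDigit (i : ℕ) : Measurable fun a => triadicDigit a i := by
  have h1 : Measurable fun a : ℝ => ⌊3 ^ i * a⌋ := (measurable_const.mul measurable_id).floor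
  exact (Measurable.of_discrete (f := fun z : ℤ => (z % 3).toNat)).comp h1

lemma ennreal_pow_div_succ (k : ℕ) : ((3:ENNReal) ^ k) / 3 ^ (k + 1) = 1 / 3 := by
  calc ((3:ENNReal) ^ k) / 3 ^ (k + 1) = (3 ^ k * 1) / (3 ^ k * 3) := by
        rw [mul_one, pow_succ]
    _ = 1 / 3 := ENNReal.mul_div_mul_left 1 3 (by positivity) (ENNReal.pow_ne_top (by norm_num))

lemma ennreal_pow_div_two (k : ℕ) : ((3:ENNReal) ^ k) / 3 ^ (k + 2) = 1 / 9 := by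
  calc ((3:ENNReal) ^ k) / 3 ^ (k + 2) = (3 ^ k * 1) / (3 ^ k * 9) := by
        rw [mul_one, pow_add]
        norm_num
    _ = 1 / 9 := ENNReal.mul_div_mul_left 1 9 (by positivity) (ENNReal.pow_ne_top (by norm_num))

lemma measurableSet_Aset (i : ℕ) : MeasurableSet (Aset i) := by
  have h1 := measurable_triadicDigit i
  have h2 : Measurable fun a => ∑ l ∈ Finset.Ico 1 i, triadicDigit a l :=
    Finset.measurable_sum _ (fun l _ => measurable_triadicDigit l)
  have : Aset i = (fun a => (triadicDigit a i, ∑ l ∈ Finset.Ico 1 i, triadicDigit a l)) ⁻¹'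
      {p : ℕ × ℕ | (p.1 = 0 ∧ Even p.2) ∨ (p.1 = 2 ∧ Odd p.2)} := rfl
  rw [this]
  exact (h1.prodMk h2) ((Set.to_countable _).measurableSet)

instance : IsProbabilityMeasure (volume.restrict (Set.Icc (0:ℝ) 1)) :=
  ⟨by rw [Measure.restrict_apply_univ, Real.volume_Icc]; norm_num⟩

lemma measA {i : ℕ} (hi : 1 ≤ i) :
    volume.restrict (Set.Icc (0:ℝ) 1) (Aset i) = 1 / 3 := by
  have h := meas_digit_event i (fun d => bcond d i)
    (fun d d' hh => bcond_congr' hi hh)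
  rw [show Aset i = {a | bcond (triadicDigit a) i} from rfl, h,
    countA i hi i le_rfl]
  push_cast
  obtain ⟨k, rfl⟩ : ∃ k, i = k + 1 := ⟨i - 1, by omega⟩
  simp only [Nat.add_sub_cancel]
  exact ennreal_pow_div_succ k

lemma measAB {i j : ℕ} (hi : 1 ≤ i) (hij : i < j) :
    volume.restrict (Set.Icc (0:ℝ) 1) (Aset i ∩ Aset j) = 1 / 9 := by
  have h := meas_digit_event j (fun d => bcond d i ∧ bcond d j)
    (fun d d' hh => by
      show (bcond d i ∧ bcond d j) ↔ (bcond d' i ∧ bcond d' j)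
      rw [bcond_congr' hi (fun l h1 h2 => hh l h1 (by omega)),
        bcond_congr' (by omega : 1 ≤ j) hh])
  rw [show Aset i ∩ Aset j = {a | bcond (triadicDigit a) i ∧ bcond (triadicDigit a) j}
      from rfl, h, countB i j hi hij]
  push_cast
  obtain ⟨k, rfl⟩ : ∃ k, j = k + 2 := ⟨j - 2, by omega⟩
  simp only [Nat.add_sub_cancel]
  exact ennreal_pow_div_two k

lemma indepFun_indicator_pair {Ω : Type*} [MeasurableSpace Ω] {μ : Measure Ω}
    [IsProbabilityMeasure μ] {A B : Set Ω} (hA : MeasurableSet A) (hB : MeasurableSet B)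
    (h : μ (A ∩ B) = μ A * μ B) :
    IndepFun (A.indicator fun _ => (1:ℝ)) (B.indicator fun _ => (1:ℝ)) μ := by
  classical
  have hAB : IndepSet A B μ := (indepSet_iff_measure_inter_eq_mul hA hB μ).mpr h
  rw [IndepSet_iff] at hAB
  rw [IndepFun_iff]
  intro t1 t2 ht1 ht2
  obtain ⟨s1, hs1, rfl⟩ := ht1
  obtain ⟨s2, hs2, rfl⟩ := ht2
  rw [Set.indicator_const_preimage_eq_union, Set.indicator_const_preimage_eq_union]
  have hgA : MeasurableSet[MeasurableSpace.generateFrom {A}] A :=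
    MeasurableSpace.measurableSet_generateFrom rfl
  have hgB : MeasurableSet[MeasurableSpace.generateFrom {B}] B :=
    MeasurableSpace.measurableSet_generateFrom rfl
  apply hAB
  · apply MeasurableSet.union <;> split_ifs <;>
      first
        | exact hgA
        | exact hgA.compl
        | exact @MeasurableSet.empty _ (MeasurableSpace.generateFrom {A})
  · apply MeasurableSet.union <;> split_ifs <;>
      first
        | exact hgB
        | exact hgB.compl
        | exact @MeasurableSet.empty _ (MeasurableSpace.generateFrom {B})

lemma identDistrib_indicator {Ω : Type*} [MeasurableSpace Ω] {μ : Measure Ω}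
    [IsProbabilityMeasure μ] {A B : Set Ω} (hA : MeasurableSet A) (hB : MeasurableSet B)
    (h : μ A = μ B) :
    IdentDistrib (A.indicator fun _ => (1:ℝ)) (B.indicator fun _ => (1:ℝ)) μ μ := by
  classical
  refine ⟨(measurable_const.indicator hA).aemeasurable,
    (measurable_const.indicator hB).aemeasurable, ?_⟩
  apply Measure.ext
  intro s hs
  rw [Measure.map_apply (measurable_const.indicator hA) hs,
    Measure.map_apply (measurable_const.indicator hB) hs,
    Set.indicator_const_preimage_eq_union, Set.indicator_const_preimage_eq_union]
  have hcompl : μ Aᶜ = μ Bᶜ := by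
    rw [measure_compl hA (measure_ne_top μ A), measure_compl hB (measure_ne_top μ B), h]
  by_cases h1 : (1:ℝ) ∈ s <;> by_cases h0 : (0:ℝ) ∈ s <;>
      simp only [h1, h0, if_true, if_false] <;>
    first
      | rw [Set.union_comm A, Set.union_comm B, Set.compl_union_self, Set.compl_union_self]
      | (simp only [Set.union_empty]; exact h)
      | (simp only [Set.empty_union]; exact hcompl)
      | simp

/-- For Lebesgue-almost every `a ∈ [0,1]`, `f_a(k)/k → 1/3` as `k → ∞`. -/
theorem stmt14 :
    ∀ᵐ a ∂(volume.restrict (Set.Icc (0 : ℝ) 1)),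
      Tendsto (fun k : ℕ => (fCount a k : ℝ) / k) atTop (nhds (1 / 3)) := by
  classical
  set μ := volume.restrict (Set.Icc (0 : ℝ) 1) with hμ
  set X : ℕ → ℝ → ℝ := fun i => (Aset (i + 1)).indicator fun _ => (1:ℝ) with hX
  have hAmeas : ∀ i, MeasurableSet (Aset (i + 1)) := fun i => measurableSet_Aset (i + 1)
  have hint : Integrable (X 0) μ := by
    rw [hX]
    rw [integrable_indicator_iff (hAmeas 0)]
    exact integrableOn_const (measure_ne_top _ _)
  have hprod : ∀ i j : ℕ, i < j →
      μ (Aset (i + 1) ∩ Aset (j + 1)) = μ (Aset (i + 1)) * μ (Aset (j + 1)) := by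
    intro i j hij
    rw [measA (by omega), measA (by omega), measAB (by omega) (by omega)]
    rw [show (1:ENNReal)/3 = 3⁻¹ from one_div 3, show (1:ENNReal)/9 = 9⁻¹ from one_div 9,
      ← ENNReal.mul_inv (Or.inl (by norm_num)) (Or.inl (by norm_num))]
    norm_num
  have hindep : Pairwise (Function.onFun (IndepFun · · μ) X) := by
    intro i j hij
    rcases Nat.lt_or_ge i j with h | h
    · exact indepFun_indicator_pair (hAmeas i) (hAmeas j) (hprod i j h)
    · have hji : j < i := by omega
      exact (indepFun_indicator_pair (hAmeas j) (hAmeas i) (hprod j i hji)).symm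
  have hident : ∀ i, IdentDistrib (X i) (X 0) μ μ := by
    intro i
    exact identDistrib_indicator (hAmeas i) (hAmeas 0)
      (by rw [measA (by omega), measA (by omega)])
  have hlaw := strong_law_ae_real X hint hindep hident
  have hmean : μ[X 0] = 1 / 3 := by
    rw [hX]
    rw [integral_indicator_const (1:ℝ) (hAmeas 0), measureReal_def, measA (by omega)]
    rw [smul_eq_mul, mul_one]
    rw [ENNReal.toReal_div]
    norm_num
  rw [hmean] at hlaw
  filter_upwards [hlaw] with a ha
  have hfc : ∀ k : ℕ, (fCount a k : ℝ) = ∑ i ∈ Finset.range k, X i a := by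
    intro k
    rw [hX]
    simp only [Set.indicator_apply]
    rw [Finset.sum_boole]
    norm_cast
    unfold fCount
    apply Finset.card_nbij' (i := fun m => m - 1) (j := fun m => m + 1)
    · intro m hm
      simp only [Finset.mem_coe, Finset.mem_filter, Finset.mem_Icc, Finset.mem_range] at hm ⊢
      obtain ⟨⟨hm1, hm2⟩, hm3⟩ := hm
      refine ⟨by omega, ?_⟩
      have : m - 1 + 1 = m := by omega
      rw [this]
      exact hm3
    · intro m hm
      simp only [Finset.mem_coe, Finset.mem_filter, Finset.mem_Icc, Finset.mem_range] at hm ⊢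
      exact ⟨⟨by omega, by omega⟩, hm.2⟩
    · intro m hm
      simp only [Finset.mem_coe, Finset.mem_filter, Finset.mem_Icc] at hm
      dsimp only
      omega
    · intro m hm
      dsimp only
      omega
  have : (fun k : ℕ => (fCount a k : ℝ) / k) = fun n : ℕ => (∑ i ∈ Finset.range n, X i a) / n := by
    funext k
    rw [hfc k]
  rw [this]
  exact ha
end

section
/- For Lebesgue-almost every a ∈ [0,1], liminf_{k→∞} 3^{-tk} · 2^{f_a(k)} = ∞ for every t < (ln 2)/(3 ln 3), and liminf_{k→∞} 3^{-tk} · 2^{f_a(k)} = 0 for every t > (ln 2)/(3 ln 3). -/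
open MeasureTheory Filter Set Topology
open scoped ENNReal NNReal

/-! ### Natural-number model of the first `k` digits -/

/-- digit `i` (1-indexed, most significant first) of the `k`-digit base-3 rep of `n`. -/
def natDigit (k n i : ℕ) : ℕ := n / 3 ^ (k - i) % 3

def natF (k n : ℕ) : ℕ :=
  ((Finset.Icc 1 k).filter fun i =>
    (natDigit k n i = 0 ∧ Even (∑ l ∈ Finset.Ico 1 i, natDigit k n l)) ∨
    (natDigit k n i = 2 ∧ Odd (∑ l ∈ Finset.Ico 1 i, natDigit k n l))).card

def dSum (k n : ℕ) : ℕ := ∑ l ∈ Finset.Ico 1 (k+1), natDigit k n l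

lemma triadicDigit_eq (a : ℝ) (ha : 0 ≤ a) (i : ℕ) :
    triadicDigit a i = ⌊3 ^ i * a⌋₊ % 3 := by
  have h1 : ⌊3 ^ i * a⌋ = (⌊3 ^ i * a⌋₊ : ℤ) := by
    rw [← Int.floor_toNat, Int.toNat_of_nonneg (Int.floor_nonneg.2 (by positivity))]
  rw [triadicDigit, h1]; omega

lemma natFloor_pow_div (a : ℝ) {i k : ℕ} (hik : i ≤ k) :
    ⌊3 ^ i * a⌋₊ = ⌊3 ^ k * a⌋₊ / 3 ^ (k - i) := by
  rw [← Nat.floor_div_natCast]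
  congr 1
  push_cast
  rw [eq_div_iff (by positivity), mul_comm, ← mul_assoc, ← pow_add]
  congr 2
  omega

lemma triadicDigit_eq_natDigit (a : ℝ) (ha : 0 ≤ a) {i k : ℕ} (hik : i ≤ k) :
    triadicDigit a i = natDigit k ⌊3 ^ k * a⌋₊ i := by
  rw [triadicDigit_eq a ha, natDigit, natFloor_pow_div a hik]

lemma fCount_eq_natF (a : ℝ) (ha : 0 ≤ a) (k : ℕ) :
    fCount a k = natF k ⌊3 ^ k * a⌋₊ := by
  unfold fCount natF
  congr 1
  apply Finset.filter_congr
  intro i hi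
  simp only [Finset.mem_Icc] at hi
  have hd : ∀ l ∈ Finset.Ico 1 i, triadicDigit a l = natDigit k ⌊3 ^ k * a⌋₊ l := by
    intro l hl
    simp only [Finset.mem_Ico] at hl
    exact triadicDigit_eq_natDigit a ha (le_trans (Nat.le_of_lt_succ (Nat.lt_succ_of_lt hl.2)) hi.2)
  rw [Finset.sum_congr rfl hd, triadicDigit_eq_natDigit a ha hi.2]

lemma natDigit_succ (k n d : ℕ) (hd : d < 3) {i : ℕ} (hi : i ≤ k) :
    natDigit (k+1) (3*n+d) i = natDigit k n i := by
  unfold natDigit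
  have h1 : k + 1 - i = (k - i) + 1 := by omega
  rw [h1, pow_succ, mul_comm (3^(k-i)) 3, ← Nat.div_div_eq_div_mul]
  congr 2
  omega

lemma natDigit_succ_last (k n d : ℕ) (hd : d < 3) :
    natDigit (k+1) (3*n+d) (k+1) = d := by
  unfold natDigit
  simp only [Nat.sub_self, pow_zero, Nat.div_one]
  omega

lemma natF_succ (k n d : ℕ) (hd : d < 3) :
    natF (k+1) (3*n+d) = natF k n +
      (if (d = 0 ∧ Even (dSum k n)) ∨ (d = 2 ∧ Odd (dSum k n)) then 1 else 0) := by
  unfold natF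
  have hIcc : Finset.Icc 1 (k+1) = insert (k+1) (Finset.Icc 1 k) := by
    ext x; simp only [Finset.mem_Icc, Finset.mem_insert]; omega
  have hsum : ∀ i, i ≤ k + 1 →
      ∑ l ∈ Finset.Ico 1 i, natDigit (k+1) (3*n+d) l = ∑ l ∈ Finset.Ico 1 i, natDigit k n l := by
    intro i hi
    apply Finset.sum_congr rfl
    intro l hl
    simp only [Finset.mem_Ico] at hl
    exact natDigit_succ k n d hd (by omega)
  have hfilter : (Finset.Icc 1 k).filter (fun i =>
      (natDigit (k+1) (3*n+d) i = 0 ∧ Even (∑ l ∈ Finset.Ico 1 i, natDigit (k+1) (3*n+d) l)) ∨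
      (natDigit (k+1) (3*n+d) i = 2 ∧ Odd (∑ l ∈ Finset.Ico 1 i, natDigit (k+1) (3*n+d) l))) =
      (Finset.Icc 1 k).filter (fun i =>
      (natDigit k n i = 0 ∧ Even (∑ l ∈ Finset.Ico 1 i, natDigit k n l)) ∨
      (natDigit k n i = 2 ∧ Odd (∑ l ∈ Finset.Ico 1 i, natDigit k n l))) := by
    apply Finset.filter_congr
    intro i hi
    simp only [Finset.mem_Icc] at hi
    rw [natDigit_succ k n d hd hi.2, hsum i (by omega)]
  have hcond : ((natDigit (k+1) (3*n+d) (k+1) = 0 ∧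
        Even (∑ l ∈ Finset.Ico 1 (k+1), natDigit (k+1) (3*n+d) l)) ∨
      (natDigit (k+1) (3*n+d) (k+1) = 2 ∧
        Odd (∑ l ∈ Finset.Ico 1 (k+1), natDigit (k+1) (3*n+d) l))) ↔
      ((d = 0 ∧ Even (dSum k n)) ∨ (d = 2 ∧ Odd (dSum k n))) := by
    rw [natDigit_succ_last k n d hd, hsum (k+1) le_rfl]
    rfl
  rw [hIcc, Finset.filter_insert, hfilter]
  by_cases hc : (d = 0 ∧ Even (dSum k n)) ∨ (d = 2 ∧ Odd (dSum k n))
  · rw [if_pos (hcond.2 hc), if_pos hc, Finset.card_insert_of_notMem (by simp)]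
  · rw [if_neg fun h => hc (hcond.1 h), if_neg hc, add_zero]

lemma sum_pow_natF (lam : ℝ) (k : ℕ) :
    ∑ j ∈ Finset.range (3^k), lam ^ natF k j = (lam + 2)^k := by
  induction k with
  | zero => simp [natF]
  | succ k ih =>
    have key : ∑ j ∈ Finset.range (3^(k+1)), lam ^ natF (k+1) j =
        ∑ p ∈ Finset.range (3^k) ×ˢ Finset.range 3, lam ^ natF (k+1) (3*p.1+p.2) := by
      apply Finset.sum_nbij' (fun j => (j / 3, j % 3)) (fun p => 3 * p.1 + p.2)
      · intro j hj
        simp only [Finset.mem_range] at hj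
        simp only [Finset.mem_product, Finset.mem_range]
        constructor
        · have : 3^(k+1) = 3 * 3^k := by ring
          omega
        · omega
      · intro p hp
        simp only [Finset.mem_product, Finset.mem_range] at hp
        simp only [Finset.mem_range]
        have : 3^(k+1) = 3 * 3^k := by ring
        omega
      · intro j hj
        simp only
        omega
      · intro p hp
        simp only [Finset.mem_product, Finset.mem_range] at hp
        ext <;> simp <;> omega
      · intro j hj
        have h : 3 * (j / 3) + j % 3 = j := by omega
        simp only [h]
    rw [key, Finset.sum_product]
    have inner : ∀ n ∈ Finset.range (3^k),
        ∑ d ∈ Finset.range 3, lam ^ natF (k+1) (3*n+d) = lam ^ natF k n * (lam + 2) := by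
      intro n _
      have e0 := natF_succ k n 0 (by omega)
      have e1 := natF_succ k n 1 (by omega)
      have e2 := natF_succ k n 2 (by omega)
      rw [Finset.sum_range_succ, Finset.sum_range_succ, Finset.sum_range_one, e0, e1, e2]
      rcases Nat.even_or_odd (dSum k n) with he | ho
      · have hno : ¬ Odd (dSum k n) := by rwa [Nat.not_odd_iff_even]
        rw [if_pos (Or.inl ⟨rfl, he⟩), if_neg (by simp [hno]), if_neg (by simp [hno])]
        simp only [pow_succ, pow_add, pow_zero, add_zero, pow_one]
        ring
      · have hne : ¬ Even (dSum k n) := by rwa [Nat.not_even_iff_odd]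
        rw [if_neg (by simp [hne]), if_neg (by simp), if_pos (Or.inr ⟨rfl, ho⟩)]
        simp only [pow_succ, pow_add, pow_zero, add_zero, pow_one]
        ring
    rw [Finset.sum_congr rfl inner, ← Finset.sum_mul, ih, pow_succ]

/-! ### Chernoff bounds for the counting function -/

lemma card_ge_le (lam c : ℝ) (hlam : 1 ≤ lam) (k : ℕ) :
    (((Finset.range (3^k)).filter fun j => c ≤ (natF k j : ℝ)).card : ℝ) * lam ^ c
      ≤ (lam + 2)^k := by
  have hpos : (0:ℝ) < lam := lt_of_lt_of_le one_pos hlam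
  calc (((Finset.range (3^k)).filter fun j => c ≤ (natF k j : ℝ)).card : ℝ) * lam ^ c
      = ∑ j ∈ (Finset.range (3^k)).filter fun j => c ≤ (natF k j : ℝ), lam ^ c := by
        rw [Finset.sum_const, nsmul_eq_mul]
    _ ≤ ∑ j ∈ (Finset.range (3^k)).filter fun j => c ≤ (natF k j : ℝ), lam ^ natF k j := by
        apply Finset.sum_le_sum
        intro j hj
        simp only [Finset.mem_filter] at hj
        calc lam ^ c ≤ lam ^ ((natF k j : ℝ)) := Real.rpow_le_rpow_of_exponent_le hlam hj.2
          _ = lam ^ natF k j := Real.rpow_natCast lam _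
    _ ≤ ∑ j ∈ Finset.range (3^k), lam ^ natF k j :=
        Finset.sum_le_sum_of_subset_of_nonneg (Finset.filter_subset _ _)
          (fun j _ _ => by positivity)
    _ = (lam + 2)^k := sum_pow_natF lam k

lemma card_le_le (lam c : ℝ) (h0 : 0 < lam) (h1 : lam ≤ 1) (k : ℕ) :
    (((Finset.range (3^k)).filter fun j => (natF k j : ℝ) ≤ c).card : ℝ) * lam ^ c
      ≤ (lam + 2)^k := by
  calc (((Finset.range (3^k)).filter fun j => (natF k j : ℝ) ≤ c).card : ℝ) * lam ^ c
      = ∑ j ∈ (Finset.range (3^k)).filter fun j => (natF k j : ℝ) ≤ c, lam ^ c := by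
        rw [Finset.sum_const, nsmul_eq_mul]
    _ ≤ ∑ j ∈ (Finset.range (3^k)).filter fun j => (natF k j : ℝ) ≤ c, lam ^ natF k j := by
        apply Finset.sum_le_sum
        intro j hj
        simp only [Finset.mem_filter] at hj
        calc lam ^ c ≤ lam ^ ((natF k j : ℝ)) := Real.rpow_le_rpow_of_exponent_ge h0 h1 hj.2
          _ = lam ^ natF k j := Real.rpow_natCast lam _
    _ ≤ ∑ j ∈ Finset.range (3^k), lam ^ natF k j :=
        Finset.sum_le_sum_of_subset_of_nonneg (Finset.filter_subset _ _)
          (fun j _ _ => by positivity)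
    _ = (lam + 2)^k := sum_pow_natF lam k

/-! ### Measure of digit-determined sets -/

lemma volume_floorSet_le (k : ℕ) (P : ℕ → Prop) [DecidablePred P] :
    volume {a : ℝ | a ∈ Icc (0:ℝ) 1 ∧ P ⌊3 ^ k * a⌋₊}
      ≤ ENNReal.ofReal ((((Finset.range (3^k)).filter P).card : ℝ) * ((3:ℝ)^k)⁻¹) := by
  have h3k : (0:ℝ) < 3^k := by positivity
  have hsub : {a : ℝ | a ∈ Icc (0:ℝ) 1 ∧ P ⌊3 ^ k * a⌋₊} ⊆
      (⋃ j ∈ (Finset.range (3^k)).filter P, Ico ((j:ℝ)/3^k) ((j+1)/3^k)) ∪ {(1:ℝ)} := by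
    rintro a ⟨⟨h0, h1⟩, hP⟩
    rcases eq_or_lt_of_le h1 with rfl | h1'
    · exact Or.inr rfl
    · left
      set j := ⌊3 ^ k * a⌋₊ with hj
      have hnn : (0:ℝ) ≤ 3 ^ k * a := by positivity
      have hjlt : j < 3^k := by
        rw [hj]
        rw [Nat.floor_lt hnn]
        push_cast
        nlinarith
      refine Set.mem_iUnion₂.2 ⟨j, Finset.mem_filter.2 ⟨Finset.mem_range.2 hjlt, hP⟩, ?_, ?_⟩
      · rw [div_le_iff₀ h3k, mul_comm]
        exact Nat.floor_le hnn
      · rw [lt_div_iff₀ h3k, mul_comm]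
        exact Nat.lt_floor_add_one _
  calc volume {a : ℝ | a ∈ Icc (0:ℝ) 1 ∧ P ⌊3 ^ k * a⌋₊}
      ≤ volume ((⋃ j ∈ (Finset.range (3^k)).filter P, Ico ((j:ℝ)/3^k) ((j+1)/3^k)) ∪ {(1:ℝ)}) :=
        measure_mono hsub
    _ ≤ volume (⋃ j ∈ (Finset.range (3^k)).filter P, Ico ((j:ℝ)/3^k) ((j+1)/3^k)) + volume {(1:ℝ)} :=
        measure_union_le _ _
    _ = volume (⋃ j ∈ (Finset.range (3^k)).filter P, Ico ((j:ℝ)/3^k) ((j+1)/3^k)) := by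
        simp
    _ ≤ ∑ j ∈ (Finset.range (3^k)).filter P, volume (Ico ((j:ℝ)/3^k) ((j+1)/3^k)) :=
        measure_biUnion_finset_le _ _
    _ = ∑ j ∈ (Finset.range (3^k)).filter P, ENNReal.ofReal (((3:ℝ)^k)⁻¹) := by
        apply Finset.sum_congr rfl
        intro j _
        rw [Real.volume_Ico]
        congr 1
        field_simp
        ring
    _ = (((Finset.range (3^k)).filter P).card : ℝ≥0∞) * ENNReal.ofReal (((3:ℝ)^k)⁻¹) := by
        rw [Finset.sum_const, nsmul_eq_mul]
    _ = ENNReal.ofReal ((((Finset.range (3^k)).filter P).card : ℝ) * ((3:ℝ)^k)⁻¹) := by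
        rw [ENNReal.ofReal_mul (by positivity), ENNReal.ofReal_natCast]

/-! ### λ existence -/

lemma psi_deriv (c : ℝ) : HasDerivAt (fun x : ℝ => 3 * x ^ c - x - 2) (3 * c - 1) 1 := by
  have h := (Real.hasDerivAt_rpow_const (x := 1) (p := c) (Or.inl one_ne_zero)).const_mul 3
  have h2 := (h.sub (hasDerivAt_id 1)).sub_const 2
  simpa using h2

lemma exists_lam_up {α : ℝ} (hα : 1/3 < α) :
    ∃ lam : ℝ, 1 ≤ lam ∧ lam ^ (-α) * (lam + 2) / 3 < 1 := by
  have hd := psi_deriv α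
  have hslope := hasDerivAt_iff_tendsto_slope.1 hd
  have hpos : (0:ℝ) < 3 * α - 1 := by linarith
  have hev : ∀ᶠ y in 𝓝[≠] (1:ℝ), 0 < slope (fun x : ℝ => 3 * x ^ α - x - 2) 1 y :=
    hslope.eventually (eventually_gt_nhds hpos)
  have hmono : 𝓝[>] (1:ℝ) ≤ 𝓝[≠] (1:ℝ) :=
    nhdsWithin_mono 1 fun x hx => ne_of_gt hx
  obtain ⟨lam, hs, hlam⟩ := ((hev.filter_mono hmono).and self_mem_nhdsWithin).exists
  refine ⟨lam, le_of_lt hlam, ?_⟩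
  have h1 : (0:ℝ) < lam - 1 := by linarith [hlam]
  have heq : slope (fun x : ℝ => 3 * x ^ α - x - 2) 1 lam
      = (3 * lam ^ α - lam - 2) / (lam - 1) := by
    rw [slope_def_field]; norm_num [Real.one_rpow]
  rw [heq] at hs
  have hψ : 0 < 3 * lam ^ α - lam - 2 := by
    rcases (div_pos_iff).1 hs with ⟨h, _⟩ | ⟨_, h⟩
    · linarith
    · linarith
  have hlampos : (0:ℝ) < lam := by linarith
  have hrp : (0:ℝ) < lam ^ α := Real.rpow_pos_of_pos hlampos α
  rw [Real.rpow_neg (le_of_lt hlampos)]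
  rw [div_lt_one (by norm_num : (0:ℝ) < 3), inv_mul_lt_iff₀ hrp]
  nlinarith

lemma exists_lam_lo {β : ℝ} (hβ : β < 1/3) :
    ∃ lam : ℝ, 0 < lam ∧ lam ≤ 1 ∧ lam ^ (-β) * (lam + 2) / 3 < 1 := by
  have hd := psi_deriv β
  have hslope := hasDerivAt_iff_tendsto_slope.1 hd
  have hneg : 3 * β - 1 < 0 := by linarith
  have hev : ∀ᶠ y in 𝓝[≠] (1:ℝ), slope (fun x : ℝ => 3 * x ^ β - x - 2) 1 y < 0 :=
    hslope.eventually (eventually_lt_nhds hneg)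
  have hmono : 𝓝[<] (1:ℝ) ≤ 𝓝[≠] (1:ℝ) :=
    nhdsWithin_mono 1 fun x hx => ne_of_lt hx
  have hIoo : Ioo (0:ℝ) 1 ∈ 𝓝[<] (1:ℝ) :=
    Ioo_mem_nhdsLT_of_mem (by norm_num)
  obtain ⟨lam, hs, hlam⟩ := ((hev.filter_mono hmono).and (eventually_mem_set.2 hIoo)).exists
  obtain ⟨hl0, hl1⟩ := hlam
  refine ⟨lam, hl0, le_of_lt hl1, ?_⟩
  have h1 : lam - 1 < 0 := by linarith
  have heq : slope (fun x : ℝ => 3 * x ^ β - x - 2) 1 lam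
      = (3 * lam ^ β - lam - 2) / (lam - 1) := by
    rw [slope_def_field]; norm_num [Real.one_rpow]
  rw [heq] at hs
  have hψ : 0 < 3 * lam ^ β - lam - 2 := by
    rcases (div_neg_iff).1 hs with ⟨h, h'⟩ | ⟨h, h'⟩
    · linarith
    · linarith
  have hrp : (0:ℝ) < lam ^ β := Real.rpow_pos_of_pos hl0 β
  rw [Real.rpow_neg (le_of_lt hl0)]
  rw [div_lt_one (by norm_num : (0:ℝ) < 3), inv_mul_lt_iff₀ hrp]
  nlinarith

/-! ### Bad sets and their measures -/

def badUp (α : ℝ) (k : ℕ) : Set ℝ := {a | a ∈ Icc (0:ℝ) 1 ∧ α * k ≤ (fCount a k : ℝ)}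

def badLo (β : ℝ) (k : ℕ) : Set ℝ := {a | a ∈ Icc (0:ℝ) 1 ∧ (fCount a k : ℝ) ≤ β * k}

lemma volume_badUp_le (α lam : ℝ) (hlam : 1 ≤ lam) (k : ℕ) :
    volume (badUp α k) ≤ ENNReal.ofReal ((lam ^ (-α) * (lam + 2) / 3)^k) := by
  have hpos : (0:ℝ) < lam := lt_of_lt_of_le one_pos hlam
  have hset : badUp α k = {a : ℝ | a ∈ Icc (0:ℝ) 1 ∧ α * k ≤ (natF k ⌊3^k * a⌋₊ : ℝ)} := by
    ext a
    simp only [badUp, mem_setOf_eq]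
    refine and_congr_right fun h => ?_
    rw [← fCount_eq_natF a h.1]
  rw [hset]
  refine le_trans (volume_floorSet_le k (fun j => α * k ≤ (natF k j : ℝ))) ?_
  apply ENNReal.ofReal_le_ofReal
  have hch := card_ge_le lam (α * k) hlam k
  have hpos2 : (0:ℝ) < lam ^ (α * (k:ℝ)) := Real.rpow_pos_of_pos hpos _
  have hcard : ((((Finset.range (3^k)).filter fun j => α * k ≤ (natF k j : ℝ)).card : ℝ))
      ≤ (lam + 2)^k / lam ^ (α * (k:ℝ)) := (le_div_iff₀ hpos2).2 hch
  have hpowid : (lam ^ (-α) * (lam + 2) / 3 : ℝ)^k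
      = (lam ^ (α * (k:ℝ)))⁻¹ * (lam + 2)^k / 3^k := by
    rw [div_pow, mul_pow, ← Real.rpow_natCast (lam ^ (-α)) k, ← Real.rpow_mul hpos.le, neg_mul,
      Real.rpow_neg hpos.le]
  rw [hpowid]
  have h3 : (0:ℝ) < 3^k := by positivity
  rw [div_eq_mul_inv ((lam ^ (α * (k:ℝ)))⁻¹ * (lam + 2)^k) ((3:ℝ)^k), inv_mul_eq_div]
  have h33 : ((3:ℝ)^k)⁻¹ = ((3:ℝ)^k)⁻¹ := rfl
  calc (((Finset.range (3^k)).filter fun j => α * k ≤ (natF k j : ℝ)).card : ℝ) * ((3:ℝ)^k)⁻¹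
      ≤ ((lam + 2)^k / lam ^ (α * (k:ℝ))) * ((3:ℝ)^k)⁻¹ := by
        apply mul_le_mul_of_nonneg_right hcard (by positivity)
    _ = (lam + 2)^k / lam ^ (α * (k:ℝ)) * ((3:ℝ)^k)⁻¹ := rfl

lemma volume_badLo_le (β lam : ℝ) (h0 : 0 < lam) (h1 : lam ≤ 1) (k : ℕ) :
    volume (badLo β k) ≤ ENNReal.ofReal ((lam ^ (-β) * (lam + 2) / 3)^k) := by
  have hset : badLo β k = {a : ℝ | a ∈ Icc (0:ℝ) 1 ∧ (natF k ⌊3^k * a⌋₊ : ℝ) ≤ β * k} := by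
    ext a
    simp only [badLo, mem_setOf_eq]
    refine and_congr_right fun h => ?_
    rw [← fCount_eq_natF a h.1]
  rw [hset]
  refine le_trans (volume_floorSet_le k (fun j => (natF k j : ℝ) ≤ β * k)) ?_
  apply ENNReal.ofReal_le_ofReal
  have hch := card_le_le lam (β * k) h0 h1 k
  have hpos2 : (0:ℝ) < lam ^ (β * (k:ℝ)) := Real.rpow_pos_of_pos h0 _
  have hcard : ((((Finset.range (3^k)).filter fun j => (natF k j : ℝ) ≤ β * k).card : ℝ))
      ≤ (lam + 2)^k / lam ^ (β * (k:ℝ)) := (le_div_iff₀ hpos2).2 hch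
  have hpowid : (lam ^ (-β) * (lam + 2) / 3 : ℝ)^k
      = (lam ^ (β * (k:ℝ)))⁻¹ * (lam + 2)^k / 3^k := by
    rw [div_pow, mul_pow, ← Real.rpow_natCast (lam ^ (-β)) k, ← Real.rpow_mul h0.le, neg_mul,
      Real.rpow_neg h0.le]
  rw [hpowid]
  rw [div_eq_mul_inv ((lam ^ (β * (k:ℝ)))⁻¹ * (lam + 2)^k) ((3:ℝ)^k), inv_mul_eq_div]
  apply mul_le_mul_of_nonneg_right hcard (by positivity)

/-! ### Borel–Cantelli step -/

lemma ae_eventually_bad (ε : ℝ) (hε : 0 < ε) :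
    ∀ᵐ a ∂(volume.restrict (Set.Icc (0 : ℝ) 1)), ∀ᶠ k in atTop,
      ¬ a ∈ badUp (1/3 + ε) k ∧ ¬ a ∈ badLo (1/3 - ε) k := by
  obtain ⟨l1, hl1, hr1⟩ := exists_lam_up (α := 1/3 + ε) (by linarith)
  obtain ⟨l2, hl20, hl21, hr2⟩ := exists_lam_lo (β := 1/3 - ε) (by linarith)
  set r1 := l1 ^ (-(1/3 + ε)) * (l1 + 2) / 3 with hr1def
  set r2 := l2 ^ (-(1/3 - ε)) * (l2 + 2) / 3 with hr2def
  have hl1pos : (0:ℝ) < l1 := lt_of_lt_of_le one_pos hl1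
  have hr1nn : 0 ≤ r1 := by
    rw [hr1def]; positivity
  have hr2nn : 0 ≤ r2 := by
    rw [hr2def]; positivity
  have hq1 : ENNReal.ofReal r1 < 1 := by
    rw [show (1:ℝ≥0∞) = ENNReal.ofReal 1 by simp]
    exact ENNReal.ofReal_lt_ofReal_iff_of_nonneg hr1nn |>.2 hr1
  have hq2 : ENNReal.ofReal r2 < 1 := by
    rw [show (1:ℝ≥0∞) = ENNReal.ofReal 1 by simp]
    exact ENNReal.ofReal_lt_ofReal_iff_of_nonneg hr2nn |>.2 hr2
  have hsum : ∑' k : ℕ, (volume.restrict (Set.Icc (0:ℝ) 1))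
      (badUp (1/3 + ε) k ∪ badLo (1/3 - ε) k) ≠ ⊤ := by
    have hble : ∀ k : ℕ, (volume.restrict (Set.Icc (0:ℝ) 1))
        (badUp (1/3 + ε) k ∪ badLo (1/3 - ε) k)
        ≤ ENNReal.ofReal r1 ^ k + ENNReal.ofReal r2 ^ k := by
      intro k
      calc (volume.restrict (Set.Icc (0:ℝ) 1)) (badUp (1/3 + ε) k ∪ badLo (1/3 - ε) k)
          = volume ((badUp (1/3 + ε) k ∪ badLo (1/3 - ε) k) ∩ Set.Icc (0:ℝ) 1) :=
            Measure.restrict_apply' measurableSet_Icc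
        _ ≤ volume (badUp (1/3 + ε) k ∪ badLo (1/3 - ε) k) := measure_mono inter_subset_left
        _ ≤ volume (badUp (1/3 + ε) k) + volume (badLo (1/3 - ε) k) := measure_union_le _ _
        _ ≤ ENNReal.ofReal (r1 ^ k) + ENNReal.ofReal (r2 ^ k) :=
            add_le_add (volume_badUp_le _ l1 hl1 k) (volume_badLo_le _ l2 hl20 hl21 k)
        _ = ENNReal.ofReal r1 ^ k + ENNReal.ofReal r2 ^ k := by
            rw [ENNReal.ofReal_pow hr1nn, ENNReal.ofReal_pow hr2nn]
    apply ne_of_lt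
    calc ∑' k : ℕ, (volume.restrict (Set.Icc (0:ℝ) 1))
          (badUp (1/3 + ε) k ∪ badLo (1/3 - ε) k)
        ≤ ∑' k : ℕ, (ENNReal.ofReal r1 ^ k + ENNReal.ofReal r2 ^ k) :=
          ENNReal.tsum_le_tsum hble
      _ = (1 - ENNReal.ofReal r1)⁻¹ + (1 - ENNReal.ofReal r2)⁻¹ := by
          rw [ENNReal.tsum_add, ENNReal.tsum_geometric, ENNReal.tsum_geometric]
      _ < ⊤ := by
          apply ENNReal.add_lt_top.2
          constructor <;>
          · rw [ENNReal.inv_lt_top]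
            exact tsub_pos_of_lt (by assumption)
  filter_upwards [ae_eventually_notMem hsum] with a ha
  filter_upwards [ha] with k hk
  exact ⟨fun h => hk (Or.inl h), fun h => hk (Or.inr h)⟩

/-- For Lebesgue-almost every `a ∈ [0,1]`,
`liminf_{k→∞} 3^{-tk}·2^{f_a(k)}` is `∞` for every `t < ln 2/(3 ln 3)` and `0` for every
`t > ln 2/(3 ln 3)`. -/
theorem stmt15 :
    ∀ᵐ a ∂(volume.restrict (Set.Icc (0 : ℝ) 1)),
      (∀ t : ℝ, t < Real.log 2 / (3 * Real.log 3) →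
        liminf (fun k : ℕ =>
          ENNReal.ofReal ((3 : ℝ) ^ (-(t * k)) * 2 ^ fCount a k)) atTop = ⊤) ∧
      (∀ t : ℝ, Real.log 2 / (3 * Real.log 3) < t →
        liminf (fun k : ℕ =>
          ENNReal.ofReal ((3 : ℝ) ^ (-(t * k)) * 2 ^ fCount a k)) atTop = 0) := by
  have hae : ∀ᵐ a ∂(volume.restrict (Set.Icc (0:ℝ) 1)), ∀ n : ℕ,
      ∀ᶠ k in atTop, ¬ a ∈ badUp (1/3 + 1/(n+1)) k ∧ ¬ a ∈ badLo (1/3 - 1/(n+1)) k := by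
    rw [ae_all_iff]
    intro n
    exact ae_eventually_bad (1/(n+1)) (by positivity)
  have hlog3 : 0 < Real.log 3 := Real.log_pos (by norm_num)
  have hlog2 : 0 < Real.log 2 := Real.log_pos (by norm_num)
  filter_upwards [hae, ae_restrict_mem measurableSet_Icc] with a ha haI
  have key : ∀ n : ℕ,
      ∀ᶠ k in atTop, (fCount a k : ℝ) < (1/3 + 1/(n+1)) * k ∧
        (1/3 - 1/(n+1)) * k < (fCount a k : ℝ) := by
    intro n
    filter_upwards [ha n] with k hk
    obtain ⟨h1, h2⟩ := hk
    constructor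
    · by_contra h
      exact h1 ⟨haI, not_lt.1 h⟩
    · by_contra h
      exact h2 ⟨haI, not_lt.1 h⟩
  have hexp_eq : ∀ t : ℝ, ∀ k : ℕ, (3:ℝ)^(-(t*(k:ℝ))) * 2 ^ fCount a k
      = Real.exp ((fCount a k : ℝ) * Real.log 2 - t * k * Real.log 3) := by
    intro t k
    rw [Real.rpow_def_of_pos (by norm_num : (0:ℝ) < 3), ← Real.rpow_natCast 2 (fCount a k),
      Real.rpow_def_of_pos (by norm_num : (0:ℝ) < 2), ← Real.exp_add]
    congr 1
    ring
  constructor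
  · intro t ht
    have ht' : t * (3 * Real.log 3) < Real.log 2 :=
      (lt_div_iff₀ (by positivity : (0:ℝ) < 3 * Real.log 3)).1 ht
    have hδ : 0 < Real.log 2 / 3 - t * Real.log 3 := by nlinarith
    obtain ⟨n, hn⟩ := exists_nat_one_div_lt
      (show (0:ℝ) < (Real.log 2 / 3 - t * Real.log 3) / Real.log 2 by positivity)
    have hn' : (1/((n:ℝ)+1)) * Real.log 2 < Real.log 2 / 3 - t * Real.log 3 :=
      (lt_div_iff₀ hlog2).1 hn
    set c := (1/3 - 1/((n:ℝ)+1)) * Real.log 2 - t * Real.log 3 with hc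
    have hcpos : 0 < c := by
      have hexpand : c = Real.log 2 / 3 - t * Real.log 3 - (1/((n:ℝ)+1)) * Real.log 2 := by
        rw [hc]; ring
      rw [hexpand]
      linarith
    have htend : Tendsto (fun k : ℕ =>
        (fCount a k : ℝ) * Real.log 2 - t * k * Real.log 3) atTop atTop := by
      apply tendsto_atTop_mono' atTop ?_ (tendsto_natCast_atTop_atTop.atTop_mul_const hcpos)
      filter_upwards [key n] with k hk
      have hmul : ((1/3 - 1/((n:ℝ)+1)) * k) * Real.log 2 ≤ (fCount a k : ℝ) * Real.log 2 :=
        mul_le_mul_of_nonneg_right hk.2.le hlog2.le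
      calc (k:ℝ) * c = ((1/3 - 1/((n:ℝ)+1)) * k) * Real.log 2 - t * k * Real.log 3 := by
            rw [hc]; ring
        _ ≤ (fCount a k : ℝ) * Real.log 2 - t * k * Real.log 3 := by linarith
    have htd : Tendsto (fun k : ℕ =>
        ENNReal.ofReal ((3:ℝ)^(-(t*(k:ℝ))) * 2 ^ fCount a k)) atTop (𝓝 ⊤) := by
      simp only [hexp_eq t]
      exact ENNReal.tendsto_ofReal_atTop.comp (Real.tendsto_exp_atTop.comp htend)
    exact htd.liminf_eq
  · intro t ht
    have ht' : Real.log 2 < t * (3 * Real.log 3) :=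
      (div_lt_iff₀ (by positivity : (0:ℝ) < 3 * Real.log 3)).1 ht
    have hδ : 0 < t * Real.log 3 - Real.log 2 / 3 := by nlinarith
    obtain ⟨n, hn⟩ := exists_nat_one_div_lt
      (show (0:ℝ) < (t * Real.log 3 - Real.log 2 / 3) / Real.log 2 by positivity)
    have hn' : (1/((n:ℝ)+1)) * Real.log 2 < t * Real.log 3 - Real.log 2 / 3 :=
      (lt_div_iff₀ hlog2).1 hn
    set c := (1/3 + 1/((n:ℝ)+1)) * Real.log 2 - t * Real.log 3 with hc
    have hcneg : c < 0 := by
      have hexpand : c = Real.log 2 / 3 + (1/((n:ℝ)+1)) * Real.log 2 - t * Real.log 3 := by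
        rw [hc]; ring
      rw [hexpand]
      linarith
    have htend : Tendsto (fun k : ℕ =>
        (fCount a k : ℝ) * Real.log 2 - t * k * Real.log 3) atTop atBot := by
      apply tendsto_atBot_mono' atTop ?_ (tendsto_natCast_atTop_atTop.atTop_mul_const_of_neg hcneg)
      filter_upwards [key n] with k hk
      have hmul : (fCount a k : ℝ) * Real.log 2 ≤ ((1/3 + 1/((n:ℝ)+1)) * k) * Real.log 2 :=
        mul_le_mul_of_nonneg_right hk.1.le hlog2.le
      calc (fCount a k : ℝ) * Real.log 2 - t * k * Real.log 3
          ≤ ((1/3 + 1/((n:ℝ)+1)) * k) * Real.log 2 - t * k * Real.log 3 := by linarith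
        _ = (k:ℝ) * c := by rw [hc]; ring
    have htd : Tendsto (fun k : ℕ =>
        ENNReal.ofReal ((3:ℝ)^(-(t*(k:ℝ))) * 2 ^ fCount a k)) atTop (𝓝 0) := by
      simp only [hexp_eq t]
      have h0 := ENNReal.tendsto_ofReal (Real.tendsto_exp_atBot.comp htend)
      simpa using h0
    exact htd.liminf_eq
end

section
/- For Lebesgue-almost every a ∈ [0,1], the Hausdorff dimension of E_a = K ∩ (K + a) is NOT equal to 2·(ln 2)/(ln 3) − 1; hence Mandelbrot's conjecture (that the codimension of the intersection almost surely equals the sum of the codimensions) fails for intersections of Cantor sets. -/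
open MeasureTheory Filter Set
open scoped NNReal ENNReal Topology

namespace Stmt16

/-- Addresses of the level-`n` triadic intervals covering the Cantor set. -/
def W : ℕ → Finset ℤ
  | 0 => {0}
  | n + 1 => W n ∪ (W n).image (· + 2 * 3 ^ n)

lemma W_succ (n : ℕ) : W (n + 1) = W n ∪ (W n).image (· + 2 * 3 ^ n) := rfl

lemma mem_W_bounds {n : ℕ} {k : ℤ} (hk : k ∈ W n) : 0 ≤ k ∧ k ≤ 3 ^ n - 1 := by
  induction n generalizing k with
  | zero => simp only [W, Finset.mem_singleton] at hk; simp [hk]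
  | succ n ih =>
    rw [W_succ, Finset.mem_union] at hk
    have h3 : (0:ℤ) < 3 ^ n := by positivity
    have hp : (3:ℤ) ^ (n+1) = 3 * 3 ^ n := by ring
    rcases hk with h | h
    · obtain ⟨h0, h1⟩ := ih h
      omega
    · obtain ⟨m, hm, rfl⟩ := Finset.mem_image.mp h
      obtain ⟨h0, h1⟩ := ih hm
      omega

/-- Every point of `preCantorSet n` is in a triadic interval with address in `W n`. -/
lemma preCantorSet_cover {n : ℕ} {x : ℝ} (hx : x ∈ preCantorSet n) :
    ∃ k ∈ W n, (k : ℝ) / 3 ^ n ≤ x ∧ x ≤ ((k : ℝ) + 1) / 3 ^ n := by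
  induction n generalizing x with
  | zero =>
    exact ⟨0, by simp [W], by simpa using hx.1, by simpa using hx.2⟩
  | succ n ih =>
    have h3 : (0:ℝ) < (3:ℝ) ^ n := by positivity
    rcases hx with ⟨y, hy, rfl⟩ | ⟨y, hy, rfl⟩
    · obtain ⟨k, hk, h1, h2⟩ := ih hy
      refine ⟨k, by rw [W_succ]; exact Finset.mem_union_left _ hk, ?_, ?_⟩
      · show (k:ℝ) / 3 ^ (n+1) ≤ y / 3
        rw [pow_succ, ← div_div]
        gcongr
      · show y / 3 ≤ ((k:ℝ) + 1) / 3 ^ (n+1)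
        rw [pow_succ, ← div_div]
        gcongr
    · obtain ⟨k, hk, h1, h2⟩ := ih hy
      refine ⟨k + 2 * 3 ^ n, by
        rw [W_succ]; exact Finset.mem_union_right _ (Finset.mem_image_of_mem _ hk), ?_, ?_⟩
      · show ((k + 2 * 3 ^ n : ℤ) : ℝ) / 3 ^ (n+1) ≤ (2 + y) / 3
        push_cast
        rw [pow_succ, ← div_div]
        have e : ((k:ℝ) + 2 * 3 ^ n) / 3 ^ n = (k:ℝ) / 3 ^ n + 2 := by field_simp
        rw [e]
        gcongr ?_ / 3
        linarith
      · show (2 + y) / 3 ≤ (((k + 2 * 3 ^ n : ℤ) : ℝ) + 1) / 3 ^ (n+1)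
        push_cast
        rw [pow_succ, ← div_div]
        have e2 : ((k:ℝ) + 2 * 3 ^ n + 1) / 3 ^ n = ((k:ℝ) + 1) / 3 ^ n + 2 := by
          field_simp; ring
        rw [e2]
        gcongr ?_ / 3
        linarith

lemma cantorSet_cover (n : ℕ) {x : ℝ} (hx : x ∈ cantorSet) :
    ∃ k ∈ W n, (k : ℝ) / 3 ^ n ≤ x ∧ x ≤ ((k : ℝ) + 1) / 3 ^ n :=
  preCantorSet_cover (Set.mem_iInter.mp hx n)

/-- `R n d` = number of level-`n` addresses `k` such that both `k` and `k - d` are addresses. -/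
def R (n : ℕ) (d : ℤ) : ℕ := (W n ∩ (W n).image (· + d)).card

lemma R_support {n : ℕ} {d : ℤ} (h : R n d ≠ 0) : -3 ^ n ≤ d ∧ d ≤ 3 ^ n := by
  have hne : (W n ∩ (W n).image (· + d)).Nonempty :=
    Finset.card_pos.mp (Nat.pos_of_ne_zero h)
  obtain ⟨k, hk⟩ := hne
  rw [Finset.mem_inter, Finset.mem_image] at hk
  obtain ⟨hkW, m, hm, rfl⟩ := hk
  obtain ⟨h1, h2⟩ := mem_W_bounds hkW
  obtain ⟨h3, h4⟩ := mem_W_bounds hm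
  omega

lemma R_succ_le (n : ℕ) (d : ℤ) :
    R (n + 1) d ≤ 2 * R n d + R n (d - 2 * 3 ^ n) + R n (d + 2 * 3 ^ n) := by
  classical
  set A := W n with hA
  set h : ℤ := 2 * 3 ^ n with hh
  have hinj : ∀ c : ℤ, Function.Injective (· + c) := fun c => add_left_injective c
  have himg : ∀ c c' : ℤ, (A.image (· + c)).image (· + c') = A.image (· + (c + c')) := by
    intro c c'
    rw [Finset.image_image]
    congr 1
    ext x
    simp [add_assoc]
  have key : W (n+1) ∩ (W (n+1)).image (· + d) ⊆
      ((A ∩ A.image (· + d)) ∪ ((A.image (· + h)) ∩ A.image (· + d)))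
      ∪ ((A ∩ A.image (· + (h + d))) ∪ ((A.image (· + h)) ∩ A.image (· + (h + d)))) := by
    rw [W_succ, Finset.image_union, himg h d]
    intro x hx
    rw [Finset.mem_inter, Finset.mem_union, Finset.mem_union] at hx
    obtain ⟨hx1, hx2⟩ := hx
    simp only [Finset.mem_union, Finset.mem_inter]
    rcases hx1 with h1 | h1 <;> rcases hx2 with h2 | h2
    · exact Or.inl (Or.inl ⟨h1, h2⟩)
    · exact Or.inr (Or.inl ⟨h1, h2⟩)
    · exact Or.inl (Or.inr ⟨h1, h2⟩)
    · exact Or.inr (Or.inr ⟨h1, h2⟩)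
  have e1 : ((A.image (· + h)) ∩ A.image (· + d)).card = R n (d - h) := by
    have e : A.image (· + d) = (A.image (· + (d - h))).image (· + h) := by
      rw [himg, sub_add_cancel]
    rw [e, ← Finset.image_inter _ _ (hinj h), Finset.card_image_of_injective _ (hinj h), R]
  have e4 : A.image (· + (h + d)) = (A.image (· + d)).image (· + h) := by
    rw [himg d h, add_comm h d]
  have e2 : ((A.image (· + h)) ∩ A.image (· + (h + d))).card = R n d := by
    rw [e4, ← Finset.image_inter _ _ (hinj h), Finset.card_image_of_injective _ (hinj h), R]
  have e3 : (A ∩ A.image (· + (h + d))).card = R n (d + h) := by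
    rw [R, add_comm h d]
  have e0 : (A ∩ A.image (· + d)).card = R n d := rfl
  calc R (n+1) d ≤ _ := Finset.card_le_card key
    _ ≤ ((A ∩ A.image (· + d)) ∪ ((A.image (· + h)) ∩ A.image (· + d))).card
        + ((A ∩ A.image (· + (h + d))) ∪ ((A.image (· + h)) ∩ A.image (· + (h + d)))).card :=
      Finset.card_union_le _ _
    _ ≤ ((A ∩ A.image (· + d)).card + ((A.image (· + h)) ∩ A.image (· + d)).card)
        + ((A ∩ A.image (· + (h + d))).card + ((A.image (· + h)) ∩ A.image (· + (h + d))).card) := by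
      gcongr <;> exact Finset.card_union_le _ _
    _ ≤ 2 * R n d + R n (d - h) + R n (d + h) := by
      rw [e0, e1, e2, e3]
      omega


lemma nnsqrt_add_le (a b : ℝ≥0) : NNReal.sqrt (a + b) ≤ NNReal.sqrt a + NNReal.sqrt b := by
  rw [NNReal.sqrt_le_iff_le_sq]
  have e : (NNReal.sqrt a + NNReal.sqrt b) ^ 2
      = NNReal.sqrt a ^ 2 + NNReal.sqrt b ^ 2 + 2 * (NNReal.sqrt a * NNReal.sqrt b) := by ring
  rw [e, NNReal.sq_sqrt, NNReal.sq_sqrt]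
  exact le_add_right le_rfl

/-- The half-moment sum of `R n`. -/
noncomputable def Sq (n : ℕ) : ℝ≥0 :=
  ∑ d ∈ Finset.Icc (-(3:ℤ)^n) (3^n), NNReal.sqrt (R n d)

lemma sum_sqrt_le_Sq (n : ℕ) (B : Finset ℤ) :
    ∑ d ∈ B, NNReal.sqrt (R n d) ≤ Sq n := by
  classical
  rw [← Finset.sum_filter_add_sum_filter_not B (· ∈ Finset.Icc (-(3:ℤ)^n) (3^n))]
  have h2 : ∑ d ∈ B.filter (fun d => ¬ (d ∈ Finset.Icc (-(3:ℤ)^n) (3^n))),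
      NNReal.sqrt (R n d) = 0 := by
    apply Finset.sum_eq_zero
    intro d hd
    rw [Finset.mem_filter] at hd
    have : R n d = 0 := by
      by_contra hR
      obtain ⟨hl, hr⟩ := R_support hR
      exact hd.2 (Finset.mem_Icc.mpr ⟨hl, hr⟩)
    simp [this]
  rw [h2, add_zero]
  apply Finset.sum_le_sum_of_subset
  intro d hd
  exact (Finset.mem_filter.mp hd).2

lemma sum_sqrt_shift_le_Sq (n : ℕ) (B : Finset ℤ) (c : ℤ) :
    ∑ d ∈ B, NNReal.sqrt (R n (d + c)) ≤ Sq n := by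
  classical
  have e : ∑ d ∈ B, NNReal.sqrt (R n (d + c))
      = ∑ d ∈ B.image (· + c), NNReal.sqrt (R n d) := by
    rw [Finset.sum_image]
    intro x _ y _ hxy
    exact add_left_injective c hxy
  rw [e]
  exact sum_sqrt_le_Sq n _

lemma Sq_le (n : ℕ) : Sq n ≤ (2 + NNReal.sqrt 2) ^ n := by
  induction n with
  | zero =>
    rw [Sq]
    have : Finset.Icc (-(3:ℤ)^0) ((3:ℤ)^0) = {-1, 0, 1} := by decide
    rw [this]
    have r0 : R 0 0 = 1 := by decide
    have r1 : R 0 1 = 0 := by decide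
    have rm1 : R 0 (-1) = 0 := by decide
    rw [Finset.sum_insert (by decide), Finset.sum_insert (by decide), Finset.sum_singleton]
    rw [r0, r1, rm1]
    simp
  | succ n ih =>
    have key : ∀ d : ℤ, NNReal.sqrt (R (n+1) d) ≤
        NNReal.sqrt 2 * NNReal.sqrt (R n d) + NNReal.sqrt (R n (d - 2 * 3 ^ n))
          + NNReal.sqrt (R n (d + 2 * 3 ^ n)) := by
      intro d
      have h1 : (R (n+1) d : ℝ≥0) ≤
          ((2 * R n d + R n (d - 2 * 3 ^ n) + R n (d + 2 * 3 ^ n) : ℕ) : ℝ≥0) := by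
        exact_mod_cast R_succ_le n d
      calc NNReal.sqrt (R (n+1) d)
          ≤ NNReal.sqrt ((2 * R n d + R n (d - 2 * 3 ^ n) + R n (d + 2 * 3 ^ n) : ℕ)) := by
            rw [NNReal.sqrt_le_sqrt]; exact h1
        _ ≤ NNReal.sqrt ((2 * R n d : ℕ)) + NNReal.sqrt ((R n (d - 2 * 3 ^ n) : ℕ))
            + NNReal.sqrt ((R n (d + 2 * 3 ^ n) : ℕ)) := by
            push_cast
            exact le_trans (nnsqrt_add_le _ _) (by gcongr; exact nnsqrt_add_le _ _)
        _ = NNReal.sqrt 2 * NNReal.sqrt (R n d) + NNReal.sqrt (R n (d - 2 * 3 ^ n))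
            + NNReal.sqrt (R n (d + 2 * 3 ^ n)) := by
            push_cast
            rw [NNReal.sqrt_mul]
    calc Sq (n+1) ≤ ∑ d ∈ Finset.Icc (-(3:ℤ)^(n+1)) ((3:ℤ)^(n+1)),
          (NNReal.sqrt 2 * NNReal.sqrt (R n d) + NNReal.sqrt (R n (d - 2 * 3 ^ n))
            + NNReal.sqrt (R n (d + 2 * 3 ^ n))) := Finset.sum_le_sum (fun d _ => key d)
      _ = NNReal.sqrt 2 * (∑ d ∈ Finset.Icc (-(3:ℤ)^(n+1)) ((3:ℤ)^(n+1)), NNReal.sqrt (R n d))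
          + (∑ d ∈ Finset.Icc (-(3:ℤ)^(n+1)) ((3:ℤ)^(n+1)), NNReal.sqrt (R n (d - 2 * 3 ^ n)))
          + (∑ d ∈ Finset.Icc (-(3:ℤ)^(n+1)) ((3:ℤ)^(n+1)), NNReal.sqrt (R n (d + 2 * 3 ^ n))) := by
          rw [Finset.sum_add_distrib, Finset.sum_add_distrib, Finset.mul_sum]
      _ ≤ NNReal.sqrt 2 * Sq n + Sq n + Sq n := by
          gcongr
          · exact sum_sqrt_le_Sq n _
          · simpa [sub_eq_add_neg] using
              sum_sqrt_shift_le_Sq n (Finset.Icc (-(3:ℤ)^(n+1)) ((3:ℤ)^(n+1))) (-(2 * 3 ^ n))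
          · exact sum_sqrt_shift_le_Sq n _ _
      _ = (2 + NNReal.sqrt 2) * Sq n := by ring
      _ ≤ (2 + NNReal.sqrt 2) * (2 + NNReal.sqrt 2) ^ n := by gcongr
      _ = (2 + NNReal.sqrt 2) ^ (n + 1) := by ring


/-- Chernoff threshold `2^(n/5)`. -/
noncomputable def thr (n : ℕ) : ℝ≥0 := (2:ℝ≥0) ^ ((n:ℝ)/5)

open scoped Classical in
/-- The set of displacements `d` at level `n` where `R n d` is atypically large. -/
noncomputable def badF (n : ℕ) : Finset ℤ :=
  (Finset.Icc (-(3:ℤ)^n) (3^n)).filter (fun d => thr n ≤ NNReal.sqrt (R n d))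

/-- The set of translation parameters `a` that are bad at level `n`. -/
def Bad (n : ℕ) : Set ℝ :=
  {a | ∃ δ ∈ ({-1,0,1} : Finset ℤ), thr n ≤ NNReal.sqrt (R n (⌊(3:ℝ)^n * a⌋ + δ))}

lemma thr_pos (n : ℕ) : 0 < thr n := NNReal.rpow_pos (by norm_num)

lemma card_badF_le (n : ℕ) : ((badF n).card : ℝ≥0) * thr n ≤ (2 + NNReal.sqrt 2) ^ n := by
  have h1 : (badF n).card • thr n ≤ ∑ d ∈ badF n, NNReal.sqrt (R n d) := by
    apply Finset.card_nsmul_le_sum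
    intro d hd
    exact (Finset.mem_filter.mp hd).2
  have h2 : ∑ d ∈ badF n, NNReal.sqrt (R n d) ≤ Sq n := sum_sqrt_le_Sq n _
  calc ((badF n).card : ℝ≥0) * thr n = (badF n).card • thr n := (nsmul_eq_mul _ _).symm
    _ ≤ Sq n := le_trans h1 h2
    _ ≤ (2 + NNReal.sqrt 2) ^ n := Sq_le n

lemma Bad_subset (n : ℕ) : Bad n ⊆
    ⋃ δ ∈ ({-1,0,1} : Finset ℤ), ⋃ d ∈ badF n,
      Set.Ico (((d:ℝ) - (δ:ℝ)) / 3 ^ n) (((d:ℝ) - (δ:ℝ) + 1) / 3 ^ n) := by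
  intro a ha
  obtain ⟨δ, hδ, hth⟩ := ha
  have hpow : (0:ℝ) < (3:ℝ) ^ n := by positivity
  set d : ℤ := ⌊(3:ℝ)^n * a⌋ + δ with hd
  have hR : R n d ≠ 0 := by
    intro h0
    rw [h0] at hth
    simpa using lt_irrefl _ (lt_of_le_of_lt hth (by simpa using thr_pos n))
  have hdmem : d ∈ badF n := by
    rw [badF, Finset.mem_filter]
    obtain ⟨hl, hr⟩ := R_support hR
    exact ⟨Finset.mem_Icc.mpr ⟨hl, hr⟩, hth⟩
  refine Set.mem_biUnion hδ (Set.mem_biUnion hdmem ?_)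
  have h1 : ((d:ℝ) - (δ:ℝ)) = (⌊(3:ℝ)^n * a⌋ : ℝ) := by rw [hd]; push_cast; ring
  constructor
  · rw [h1, div_le_iff₀ hpow]
    calc (⌊(3:ℝ)^n * a⌋ : ℝ) ≤ (3:ℝ)^n * a := Int.floor_le _
      _ = a * 3 ^ n := by ring
  · rw [h1, lt_div_iff₀ hpow]
    calc a * 3 ^ n = (3:ℝ)^n * a := by ring
      _ < ⌊(3:ℝ)^n * a⌋ + 1 := Int.lt_floor_add_one _

/-- The typical-to-atypical ratio. -/
noncomputable def ρ : ℝ≥0 := (2 + NNReal.sqrt 2) / (3 * (2:ℝ≥0) ^ ((1:ℝ)/5))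

lemma rpow_fifth_pow : ((2:ℝ≥0) ^ ((1:ℝ)/5)) ^ n = thr n := by
  rw [thr, ← NNReal.rpow_natCast ((2:ℝ≥0) ^ ((1:ℝ)/5)) n, ← NNReal.rpow_mul]
  congr 1
  ring

lemma volume_Bad_le (n : ℕ) : volume (Bad n) ≤ 3 * ((ρ : ℝ≥0∞)) ^ n := by
  have h1 : volume (Bad n) ≤
      ∑ δ ∈ ({-1,0,1} : Finset ℤ), ∑ d ∈ badF n,
        volume (Set.Ico (((d:ℝ) - (δ:ℝ)) / 3 ^ n) (((d:ℝ) - (δ:ℝ) + 1) / 3 ^ n)) := by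
    refine le_trans (measure_mono (Bad_subset n)) ?_
    refine le_trans (measure_biUnion_finset_le _ _) ?_
    exact Finset.sum_le_sum fun δ _ => measure_biUnion_finset_le _ _
  have hIco : ∀ (c : ℝ), volume (Set.Ico (c / 3 ^ n) ((c + 1) / 3 ^ n))
      = (((1/3 : ℝ≥0) ^ n : ℝ≥0) : ℝ≥0∞) := by
    intro c
    rw [Real.volume_Ico]
    have : (c + 1) / (3:ℝ) ^ n - c / 3 ^ n = (1/3) ^ n := by
      field_simp
      rw [← mul_pow]; norm_num
    rw [this, show ((1/3:ℝ))^n = (((1/3:ℝ≥0)^n : ℝ≥0) : ℝ) by push_cast; norm_num,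
      ENNReal.ofReal_coe_nnreal]
  have h2 : volume (Bad n) ≤ 3 * (((badF n).card : ℝ≥0) * (1/3 : ℝ≥0) ^ n : ℝ≥0) := by
    refine le_trans h1 ?_
    simp only [hIco, Finset.sum_const, nsmul_eq_mul]
    rw [show (({-1,0,1} : Finset ℤ)).card = 3 by decide]
    push_cast
    ring_nf
    rfl
  refine le_trans h2 ?_
  rw [show (3 : ℝ≥0∞) = ((3:ℝ≥0) : ℝ≥0∞) by norm_num, ← ENNReal.coe_pow, ← ENNReal.coe_mul,
    ← ENNReal.coe_mul, ENNReal.coe_le_coe]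
  -- now in ℝ≥0
  have hcard : ((badF n).card : ℝ≥0) ≤ (2 + NNReal.sqrt 2) ^ n / thr n := by
    rw [le_div_iff₀ (thr_pos n)]
    exact card_badF_le n
  calc (3:ℝ≥0) * (((badF n).card : ℝ≥0) * (1/3) ^ n)
      ≤ 3 * (((2 + NNReal.sqrt 2) ^ n / thr n) * (1/3) ^ n) := by gcongr
    _ = 3 * ρ ^ n := by
      have hrho : ρ ^ n = (2 + NNReal.sqrt 2) ^ n / ((3:ℝ≥0) ^ n * thr n) := by
        rw [show ρ = (2 + NNReal.sqrt 2) / (3 * (2:ℝ≥0) ^ ((1:ℝ)/5)) from rfl,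
          div_pow, mul_pow, rpow_fifth_pow]
      rw [hrho, one_div, inv_pow, ← div_eq_mul_inv, div_div, mul_comm (thr n) ((3:ℝ≥0) ^ n)]


lemma rho_lt_one : ρ < 1 := by
  have hxpos : (0:ℝ) < (2:ℝ) ^ ((1:ℝ)/5) := Real.rpow_pos_of_pos (by norm_num) _
  have h5 : ((2:ℝ) ^ ((1:ℝ)/5)) ^ (5:ℕ) = 2 := by
    rw [← Real.rpow_natCast ((2:ℝ) ^ ((1:ℝ)/5)) 5, ← Real.rpow_mul (by norm_num)]
    norm_num
  have hxgt : (1.148:ℝ) < (2:ℝ) ^ ((1:ℝ)/5) := by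
    by_contra hcon
    push_neg at hcon
    have h2 : ((2:ℝ) ^ ((1:ℝ)/5)) ^ (5:ℕ) ≤ (1.148:ℝ) ^ (5:ℕ) :=
      pow_le_pow_left₀ hxpos.le hcon 5
    rw [h5] at h2
    norm_num at h2
  have hs : Real.sqrt 2 < 1.4143 := (Real.sqrt_lt' (by norm_num)).mpr (by norm_num)
  have hreal : (2:ℝ) + Real.sqrt 2 < 3 * ((2:ℝ) ^ ((1:ℝ)/5)) := by nlinarith
  rw [show ρ = (2 + NNReal.sqrt 2) / (3 * (2:ℝ≥0) ^ ((1:ℝ)/5)) from rfl]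
  have hden : 0 < 3 * (2:ℝ≥0) ^ ((1:ℝ)/5) :=
    mul_pos (by norm_num) (NNReal.rpow_pos (by norm_num))
  rw [div_lt_one hden, ← NNReal.coe_lt_coe]
  push_cast [NNReal.coe_rpow, Real.coe_sqrt]
  convert hreal using 2 <;> norm_num

lemma ae_eventually_good : ∀ᵐ a : ℝ, ∀ᶠ n in atTop, a ∉ Bad n := by
  apply MeasureTheory.ae_eventually_notMem
  have hsum : ∑' n, volume (Bad n) ≤ ∑' n : ℕ, 3 * ((ρ:ℝ≥0∞))^n :=
    ENNReal.tsum_le_tsum volume_Bad_le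
  refine ne_top_of_le_ne_top ?_ hsum
  rw [ENNReal.tsum_mul_left, ENNReal.tsum_geometric]
  refine ENNReal.mul_ne_top (by norm_num) (ENNReal.inv_ne_top.mpr ?_)
  rw [Ne, tsub_eq_zero_iff_le, not_le]
  exact ENNReal.coe_lt_one_iff.mpr rho_lt_one


open scoped Classical in
/-- The addresses of triadic intervals possibly meeting `K ∩ (K + a)` at level `n`. -/
noncomputable def goodF (n : ℕ) (a : ℝ) : Finset ℤ :=
  ({-1,0,1} : Finset ℤ).biUnion
    (fun δ => W n ∩ (W n).image (· + (⌊(3:ℝ)^n * a⌋ + δ)))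

lemma cover_of_mem (n : ℕ) (a : ℝ) {x : ℝ}
    (hx : x ∈ cantorSet ∩ ((fun x => x + a) '' cantorSet)) :
    ∃ k ∈ goodF n a, x ∈ Set.Icc ((k:ℝ)/3^n) (((k:ℝ)+1)/3^n) := by
  classical
  obtain ⟨hx1, y, hy, hyx⟩ := hx
  obtain ⟨k, hk, hk1, hk2⟩ := cantorSet_cover n hx1
  obtain ⟨m, hm, hm1, hm2⟩ := cantorSet_cover n hy
  have hpow : (0:ℝ) < (3:ℝ)^n := by positivity
  have hya : y = x - a := by simp at hyx; linarith
  rw [hya] at hm1 hm2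
  have hA1 : ((k - m - 1 : ℤ):ℝ) ≤ (3:ℝ)^n * a := by
    rw [div_le_iff₀ hpow] at hk1
    rw [le_div_iff₀ hpow] at hm2
    push_cast
    nlinarith
  have hA2 : (3:ℝ)^n * a ≤ ((k - m + 1 : ℤ):ℝ) := by
    rw [le_div_iff₀ hpow] at hk2
    rw [div_le_iff₀ hpow] at hm1
    push_cast
    nlinarith
  have hj1 : (k - m - 1 : ℤ) ≤ ⌊(3:ℝ)^n * a⌋ := Int.le_floor.mpr hA1
  have hj2 : ⌊(3:ℝ)^n * a⌋ ≤ (k - m + 1 : ℤ) := by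
    have := Int.floor_mono hA2
    rwa [Int.floor_intCast] at this
  set j : ℤ := ⌊(3:ℝ)^n * a⌋ with hjdef
  set δ : ℤ := k - m - j with hδdef
  have hδmem : δ ∈ ({-1,0,1} : Finset ℤ) := by
    simp only [Finset.mem_insert, Finset.mem_singleton]
    omega
  refine ⟨k, ?_, hk1, hk2⟩
  refine Finset.mem_biUnion.mpr ⟨δ, hδmem, ?_⟩
  refine Finset.mem_inter.mpr ⟨hk, Finset.mem_image.mpr ⟨m, hm, ?_⟩⟩
  show m + (j + δ) = k
  omega

lemma card_goodF_le {n : ℕ} {a : ℝ} (h : a ∉ Bad n) :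
    (((goodF n a).card : ℝ≥0)) ≤ 3 * thr n ^ 2 := by
  classical
  have h1 : (goodF n a).card ≤ ∑ δ ∈ ({-1,0,1} : Finset ℤ), R n (⌊(3:ℝ)^n * a⌋ + δ) :=
    Finset.card_biUnion_le
  have h2 : ∀ δ ∈ ({-1,0,1} : Finset ℤ), ((R n (⌊(3:ℝ)^n * a⌋ + δ) : ℝ≥0)) ≤ thr n ^ 2 := by
    intro δ hδ
    have hnb : ¬ (thr n ≤ NNReal.sqrt (R n (⌊(3:ℝ)^n * a⌋ + δ))) := fun hc => h ⟨δ, hδ, hc⟩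
    push_neg at hnb
    calc ((R n (⌊(3:ℝ)^n * a⌋ + δ) : ℝ≥0))
        = NNReal.sqrt (R n (⌊(3:ℝ)^n * a⌋ + δ)) ^ 2 := (NNReal.sq_sqrt _).symm
      _ ≤ thr n ^ 2 := pow_le_pow_left₀ zero_le hnb.le 2
  calc (((goodF n a).card : ℝ≥0))
      ≤ ((∑ δ ∈ ({-1,0,1} : Finset ℤ), R n (⌊(3:ℝ)^n * a⌋ + δ) : ℕ) : ℝ≥0) := by
        exact_mod_cast h1
    _ = ∑ δ ∈ ({-1,0,1} : Finset ℤ), ((R n (⌊(3:ℝ)^n * a⌋ + δ) : ℝ≥0)) := by push_cast; rfl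
    _ ≤ ∑ _δ ∈ ({-1,0,1} : Finset ℤ), thr n ^ 2 := Finset.sum_le_sum h2
    _ = 3 * thr n ^ 2 := by
        rw [Finset.sum_const, show (({-1,0,1} : Finset ℤ)).card = 3 by decide, nsmul_eq_mul]
        norm_num

/-- The per-level factor in the final geometric bound. -/
noncomputable def u : ℝ≥0 := (2:ℝ≥0) ^ ((2:ℝ)/5) * (1/3:ℝ≥0) ^ ((13:ℝ)/50)

lemma u_lt_one : u < 1 := by
  have hy : (0:ℝ≥0) < (3:ℝ≥0) ^ ((13:ℝ)/50) := NNReal.rpow_pos (by norm_num)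
  have hx50 : ((2:ℝ≥0) ^ ((2:ℝ)/5)) ^ (50:ℕ) = 2 ^ (20:ℕ) := by
    rw [← NNReal.rpow_natCast ((2:ℝ≥0) ^ ((2:ℝ)/5)) 50, ← NNReal.rpow_mul,
      ← NNReal.rpow_natCast 2 20]
    norm_num
  have hy50 : ((3:ℝ≥0) ^ ((13:ℝ)/50)) ^ (50:ℕ) = 3 ^ (13:ℕ) := by
    rw [← NNReal.rpow_natCast ((3:ℝ≥0) ^ ((13:ℝ)/50)) 50, ← NNReal.rpow_mul,
      ← NNReal.rpow_natCast 3 13]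
    norm_num
  have hxy : (2:ℝ≥0) ^ ((2:ℝ)/5) < (3:ℝ≥0) ^ ((13:ℝ)/50) := by
    apply lt_of_pow_lt_pow_left₀ 50 zero_le
    rw [hx50, hy50]
    rw [← NNReal.coe_lt_coe]
    push_cast
    norm_num
  have hinv : (1/3:ℝ≥0) ^ ((13:ℝ)/50) = ((3:ℝ≥0) ^ ((13:ℝ)/50))⁻¹ := by
    rw [one_div, NNReal.inv_rpow]
  rw [u, hinv, ← div_eq_mul_inv, div_lt_one hy]
  exact hxy

lemma thr_sq_mul (n : ℕ) :
    thr n ^ 2 * ((1/3:ℝ≥0) ^ n) ^ ((13:ℝ)/50) = u ^ n := by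
  have h1 : thr n ^ 2 = ((2:ℝ≥0) ^ ((2:ℝ)/5)) ^ n := by
    rw [thr, ← NNReal.rpow_natCast ((2:ℝ≥0) ^ ((n:ℝ)/5)) 2, ← NNReal.rpow_mul,
      ← NNReal.rpow_natCast ((2:ℝ≥0) ^ ((2:ℝ)/5)) n, ← NNReal.rpow_mul]
    congr 1
    push_cast
    ring
  have h2 : ((1/3:ℝ≥0) ^ n) ^ ((13:ℝ)/50) = ((1/3:ℝ≥0) ^ ((13:ℝ)/50)) ^ n := by
    rw [← NNReal.rpow_natCast (1/3:ℝ≥0) n, ← NNReal.rpow_mul,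
      ← NNReal.rpow_natCast ((1/3:ℝ≥0) ^ ((13:ℝ)/50)) n, ← NNReal.rpow_mul]
    congr 1
    ring
  rw [h1, h2, ← mul_pow, u]

lemma dimH_le_main (a : ℝ) (h : ∀ᶠ n in atTop, a ∉ Bad n) :
    dimH (cantorSet ∩ ((fun x => x + a) '' cantorSet)) ≤ (13/50 : ℝ≥0∞) := by
  classical
  set E := cantorSet ∩ ((fun x => x + a) '' cantorSet) with hE
  have hdiam : ∀ n : ℕ, ∀ k : ℤ,
      EMetric.diam (Set.Icc ((k:ℝ)/3^n) (((k:ℝ)+1)/3^n)) = (((1/3:ℝ≥0) ^ n : ℝ≥0) : ℝ≥0∞) := by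
    intro n k
    rw [show EMetric.diam = Metric.ediam from rfl, Real.ediam_Icc]
    have e : ((k:ℝ)+1)/3^n - (k:ℝ)/3^n = (1/3:ℝ)^n := by field_simp; rw [← mul_pow]; norm_num
    rw [e, show ((1/3:ℝ))^n = (((1/3:ℝ≥0)^n : ℝ≥0) : ℝ) by push_cast; norm_num,
      ENNReal.ofReal_coe_nnreal]
  have hμ : μH[((13:ℝ)/50)] E ≤ 0 := by
    have hr : Filter.Tendsto (fun n : ℕ => (((1/3:ℝ≥0) ^ n : ℝ≥0) : ℝ≥0∞)) atTop (𝓝 0) := by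
      rw [show ((0:ℝ≥0∞)) = (((0:ℝ≥0)) : ℝ≥0∞) by norm_num]
      rw [ENNReal.tendsto_coe]
      exact NNReal.tendsto_pow_atTop_nhds_zero_of_lt_one (by rw [← NNReal.coe_lt_coe]; norm_num)
    have hle := Measure.hausdorffMeasure_le_liminf_sum ((13:ℝ)/50) E
      (fun n : ℕ => (((1/3:ℝ≥0) ^ n : ℝ≥0) : ℝ≥0∞))
      hr
      (fun (n : ℕ) (i : ↥(goodF n a)) => Set.Icc (((i:ℤ):ℝ)/3^n) ((((i:ℤ):ℝ)+1)/3^n))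
      (Filter.Eventually.of_forall (fun n i => le_of_eq (hdiam n i)))
      (by
        filter_upwards [h] with n _hn
        intro x hx
        obtain ⟨k, hk, hxk⟩ := cover_of_mem n a hx
        exact Set.mem_iUnion.mpr ⟨⟨k, hk⟩, hxk⟩)
    refine le_trans hle ?_
    have hbound : ∀ᶠ n in atTop,
        (∑ i : ↥(goodF n a),
          EMetric.diam (Set.Icc (((i:ℤ):ℝ)/3^n) ((((i:ℤ):ℝ)+1)/3^n)) ^ ((13:ℝ)/50))
          ≤ (((3 * u ^ n : ℝ≥0)) : ℝ≥0∞) := by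
      filter_upwards [h] with n hn
      have hsum : (∑ i : ↥(goodF n a),
          EMetric.diam (Set.Icc (((i:ℤ):ℝ)/3^n) ((((i:ℤ):ℝ)+1)/3^n)) ^ ((13:ℝ)/50))
          = ((goodF n a).card : ℝ≥0∞) * ((((1/3:ℝ≥0) ^ n : ℝ≥0) : ℝ≥0∞)) ^ ((13:ℝ)/50) := by
        rw [Finset.sum_congr rfl (fun i _ => by rw [hdiam n (i:ℤ)])]
        rw [Finset.sum_const, Finset.card_univ, Fintype.card_coe, nsmul_eq_mul]
      rw [hsum]
      have hrpow : ((((1/3:ℝ≥0) ^ n : ℝ≥0) : ℝ≥0∞)) ^ ((13:ℝ)/50)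
          = ((((1/3:ℝ≥0) ^ n) ^ ((13:ℝ)/50) : ℝ≥0) : ℝ≥0∞) :=
        (ENNReal.coe_rpow_of_nonneg _ (by norm_num)).symm
      rw [hrpow, show ((goodF n a).card : ℝ≥0∞) = (((goodF n a).card : ℝ≥0) : ℝ≥0∞) by push_cast; rfl,
        ← ENNReal.coe_mul, ENNReal.coe_le_coe]
      calc ((goodF n a).card : ℝ≥0) * ((1/3:ℝ≥0) ^ n) ^ ((13:ℝ)/50)
          ≤ (3 * thr n ^ 2) * ((1/3:ℝ≥0) ^ n) ^ ((13:ℝ)/50) := by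
            gcongr
            exact card_goodF_le hn
        _ = 3 * u ^ n := by rw [mul_assoc, thr_sq_mul]
    have hG : Filter.Tendsto (fun n : ℕ => (((3 * u ^ n : ℝ≥0)) : ℝ≥0∞)) atTop (𝓝 0) := by
      rw [show ((0:ℝ≥0∞)) = (((0:ℝ≥0)) : ℝ≥0∞) by norm_num]
      rw [ENNReal.tendsto_coe]
      have := (NNReal.tendsto_pow_atTop_nhds_zero_of_lt_one u_lt_one).const_mul (3:ℝ≥0)
      simpa using this
    calc liminf (fun n : ℕ => ∑ i : ↥(goodF n a),
          EMetric.diam (Set.Icc (((i:ℤ):ℝ)/3^n) ((((i:ℤ):ℝ)+1)/3^n)) ^ ((13:ℝ)/50)) atTop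
        ≤ liminf (fun n : ℕ => (((3 * u ^ n : ℝ≥0)) : ℝ≥0∞)) atTop := liminf_le_liminf hbound
      _ = 0 := hG.liminf_eq
  have hμ0 : μH[((13:ℝ)/50)] E = 0 := le_antisymm hμ zero_le
  have hdim : dimH E ≤ ((13/50 : ℝ≥0) : ℝ≥0∞) := by
    apply dimH_le_of_hausdorffMeasure_ne_top
    rw [show (((13/50 : ℝ≥0)):ℝ) = ((13:ℝ)/50) by rw [NNReal.coe_div]; norm_num, hμ0]
    exact ENNReal.zero_ne_top
  refine le_trans hdim (le_of_eq ?_)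
  rw [ENNReal.coe_div (by norm_num)]
  norm_num

end Stmt16

/-- For Lebesgue-almost every `a ∈ [0,1]`, the Hausdorff dimension of
`E_a = K ∩ (K + a)` is NOT equal to `2·ln 2/ln 3 − 1`, the value predicted by
Mandelbrot's conjecture on the codimension of the intersection. -/
theorem stmt16 :
    ∀ᵐ a ∂(volume.restrict (Set.Icc (0 : ℝ) 1)),
      dimH (cantorSet ∩ ((fun x => x + a) '' cantorSet)) ≠
        ENNReal.ofReal (2 * (Real.log 2 / Real.log 3) - 1) := by
  have hlog3 : (0:ℝ) < Real.log 3 := Real.log_pos (by norm_num)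
  have hkey : (63:ℝ) * Real.log 3 < 100 * Real.log 2 := by
    have hpow : ((3:ℝ) ^ (63:ℕ)) < (2:ℝ) ^ (100:ℕ) := by norm_num
    have := Real.log_lt_log (by positivity) hpow
    rwa [Real.log_pow, Real.log_pow, Nat.cast_ofNat, Nat.cast_ofNat] at this
  have hc : (13:ℝ)/50 < 2 * (Real.log 2 / Real.log 3) - 1 := by
    rw [lt_sub_iff_add_lt, mul_div_assoc', lt_div_iff₀ hlog3]
    linarith
  have hlt : ((13:ℝ≥0∞)/50) < ENNReal.ofReal (2 * (Real.log 2 / Real.log 3) - 1) := by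
    have e : ((13:ℝ≥0∞)/50) = ENNReal.ofReal ((13:ℝ)/50) := by
      rw [show (13:ℝ)/50 = (((13/50 : ℝ≥0)):ℝ) by rw [NNReal.coe_div]; norm_num,
        ENNReal.ofReal_coe_nnreal, ENNReal.coe_div (by norm_num)]
      norm_num
    rw [e]
    exact (ENNReal.ofReal_lt_ofReal_iff (lt_trans (by norm_num) hc)).mpr hc
  refine ae_restrict_of_ae ?_
  filter_upwards [Stmt16.ae_eventually_good] with a ha heq
  have := Stmt16.dimH_le_main a ha
  rw [heq] at this
  exact absurd this (not_le.mpr hlt)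
end
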